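/- arXiv:1110.3188 — 6 statements merged into one kernel-verified Lean document; each statement's English description precedes it below -/
import Mathlib

section
/- For every nonzero integer n, with s_n := |Θ_i|²/(−|n|·α_i + i·n·β_i), c⁺_n := Θ_o/(Θ_o + R^{2n}·Θ̄_o) and c⁻_n := Θ̄_o/(Θ̄_o + R^{−2n}·Θ_o), one has the identity −(1/|Θ_o|²)·( α_o·n·(c⁺_n − c⁻_n) − i·n·β_o )·s_n = l_n, i.e. applying the outer boundary operator to the annulus solution whose Dirichlet datum is the trace of the disc solution produces exactly the multiplier l_n of equation (36A). -/
/-!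
With `r = R^{2n}`, the difference `c⁺ - c⁻` is `(Θ - r Θ̄)/(Θ + r Θ̄)`. Writing `α = (Θ + Θ̄)/2` and
`iβ = (Θ - Θ̄)/2`, the outer bracket `α (c⁺ - c⁻) - iβ` collapses to `(1 - r) Θ Θ̄ / (Θ + r Θ̄)`,
while the denominator of `s_n` is `-n (sign n · α_i - i β_i)`. The factors `|Θ_o|² = Θ_o Θ̄_o` and `n`
then cancel.
-/

open Complex ComplexConjugate

theorem div_sub_div_add_inv_mul {K : Type*} [Field K] {r : K} (hr : r ≠ 0) (z w : K) :
    z / (z + r * w) - w / (w + r⁻¹ * z) = (z - r * w) / (z + r * w) := by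
  have h : w + r⁻¹ * z = (z + r * w) * r⁻¹ := by field_simp; ring
  rw [h, ← div_div, div_inv_eq_mul, div_mul_eq_mul_div, mul_comm w, sub_div]

theorem Complex.re_mul_sub_I_mul_im (Θ r : ℂ) (h : Θ + r * conj Θ ≠ 0) :
    (Θ.re : ℂ) * ((Θ - r * conj Θ) / (Θ + r * conj Θ)) - I * Θ.im
      = (1 - r) * (Θ * conj Θ) / (Θ + r * conj Θ) := by
  have hI : I * (Θ.im : ℂ) = (Θ - conj Θ) / 2 := by
    rw [im_eq_sub_conj]; field_simp [I_ne_zero]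
  rw [eq_div_iff h, sub_mul, mul_assoc, div_mul_cancel₀ _ h, re_eq_add_conj, hI]
  ring

theorem Complex.add_ofReal_mul_conj_ne_zero {Θ : ℂ} (hΘ : 0 < Θ.re) {r : ℝ} (hr : 0 ≤ r) :
    Θ + r * conj Θ ≠ 0 := by
  intro h
  have := congrArg re h
  simp at this
  nlinarith

theorem Int.abs_cast_eq_sign_mul {R : Type*} [Ring R] [LinearOrder R] [IsStrictOrderedRing R]
    (n : ℤ) : |(n : R)| = n.sign * n := by
  rw [← Int.cast_abs, ← Int.sign_mul_self_eq_abs, Int.cast_mul]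

theorem neg_abs_mul_add_I_mul_eq (n : ℤ) (α β : ℝ) :
    (((-|(n : ℝ)| * α : ℝ) : ℂ) + I * n * β) = -n * (n.sign * α - β * I) := by
  rw [Int.abs_cast_eq_sign_mul]
  push_cast
  ring

theorem statement2_general (αi αo βi βo R : ℝ)
    (hαi : 0 < αi) (hαo : 0 < αo) (hR : 2 ≤ R)
    (Θi Θo : ℂ)
    (hΘo : Θo = (αo : ℂ) + (βo : ℂ) * I)
    (n : ℤ) (hn : n ≠ 0) :
    -(1 / ((‖Θo‖ ^ 2 : ℝ) : ℂ)) *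
      ((αo : ℂ) * (n : ℂ) *
          (Θo / (Θo + ((R ^ (2 * n) : ℝ) : ℂ) * (starRingEnd ℂ) Θo)
            - (starRingEnd ℂ) Θo / ((starRingEnd ℂ) Θo + ((R ^ (-(2 * n)) : ℝ) : ℂ) * Θo))
        - I * (n : ℂ) * (βo : ℂ)) *
      (((‖Θi‖ ^ 2 : ℝ) : ℂ) / (((-(|n| : ℝ) * αi : ℝ) : ℂ) + I * (n : ℂ) * (βi : ℂ)))
    = (((1 - R ^ (2 * n)) * ‖Θi‖ ^ 2 : ℝ) : ℂ) /
        (((n.sign : ℂ) * (αi : ℂ) - (βi : ℂ) * I) *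
          (Θo + ((R ^ (2 * n) : ℝ) : ℂ) * (starRingEnd ℂ) Θo)) := by
  have hre : Θo.re = αo := by simp [hΘo]
  have him : Θo.im = βo := by simp [hΘo]
  set r : ℝ := R ^ (2 * n)
  have hr : 0 < r := zpow_pos (by linarith) _
  have hRneg : ((R ^ (-(2 * n)) : ℝ) : ℂ) = (r : ℂ)⁻¹ := by rw [zpow_neg, ofReal_inv]
  have hden : Θo + r * conj Θo ≠ 0 := add_ofReal_mul_conj_ne_zero (hre ▸ hαo) hr.le
  have hΘo0 : Θo ≠ 0 := fun h => by simp [h] at hre; linarith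
  have hdisc : (n.sign : ℂ) * αi - βi * I ≠ 0 := fun h => by
    simpa [hn, hαi.ne'] using congrArg re h
  have bracket := re_mul_sub_I_mul_im Θo r hden
  rw [hRneg, div_sub_div_add_inv_mul (ofReal_ne_zero.2 hr.ne'), neg_abs_mul_add_I_mul_eq,
    Complex.sq_norm, ← mul_conj, ← hre, ← him]
  have factor_n (a x b : ℂ) : a * n * x - I * n * b = n * (a * x - I * b) := by ring
  rw [factor_n, bracket]
  have hn' : (n : ℂ) ≠ 0 := Int.cast_ne_zero.2 hn
  have hΘo0' : conj Θo ≠ 0 := (map_ne_zero _).2 hΘo0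
  push_cast
  field_simp

/-- Applying the outer boundary operator
`−(1/|Θ_o|²)·(α_o·∂_r − β_o·∂_θ)` at the unit circle to the annulus solution whose
Dirichlet datum is the trace `s_n·e^{inθ}` of the disc solution produces exactly the
multiplier `l_n` of equation (36A):
`−(1/|Θ_o|²)·(α_o·n·(c⁺_n − c⁻_n) − i·n·β_o)·s_n = l_n`. -/
theorem statement2 (αi αo βi βo R : ℝ)
    (hαi : 0 < αi) (hαo : 0 < αo) (hβi : 0 ≤ βi) (hβo : 0 ≤ βo) (hR : 2 ≤ R)
    (Θi Θo : ℂ) (hΘi : Θi = (αi : ℂ) + (βi : ℂ) * I)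
    (hΘo : Θo = (αo : ℂ) + (βo : ℂ) * I)
    (n : ℤ) (hn : n ≠ 0) :
    -(1 / ((‖Θo‖ ^ 2 : ℝ) : ℂ)) *
      ((αo : ℂ) * (n : ℂ) *
          (Θo / (Θo + ((R ^ (2 * n) : ℝ) : ℂ) * (starRingEnd ℂ) Θo)
            - (starRingEnd ℂ) Θo / ((starRingEnd ℂ) Θo + ((R ^ (-(2 * n)) : ℝ) : ℂ) * Θo))
        - I * (n : ℂ) * (βo : ℂ)) *
      (((‖Θi‖ ^ 2 : ℝ) : ℂ) / (((-(|n| : ℝ) * αi : ℝ) : ℂ) + I * (n : ℂ) * (βi : ℂ)))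
    = (((1 - R ^ (2 * n)) * ‖Θi‖ ^ 2 : ℝ) : ℂ) /
        (((n.sign : ℂ) * (αi : ℂ) - (βi : ℂ) * I) *
          (Θo + ((R ^ (2 * n) : ℝ) : ℂ) * (starRingEnd ℂ) Θo)) :=
  statement2_general αi αo βi βo R hαi hαo hR Θi Θo hΘo n hn
end

section
/- For every nonzero integer n one has the identity ( n·(2(γ_i − γ_o) + σ − σ·n²)·(R^{2n} − 1)/(Θ_o + R^{2n}·Θ̄_o) )·(1 − l_n)^{−1} = q_n, where q_n = ((A_n + i·sign(n)·B)/(A_n² + B²))·μ(n); that is, the Fourier symbol of the linearized evolution operator at the trivial state admits the closed form (44). -/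
open Complex Filter

/-!
Write `s = sign n`, `r = R^{2n}` and `D = Θ_o + r Θ̄_o`. Since `s² = 1`, `|Θ_i|²` factors as
`(s α_i − i β_i)(s α_i + i β_i)`, so `1 − l_n = (D − (1 − r)(s α_i + i β_i)) / D`, and the numerator
is `s (r − 1) (A_n − i s B)`. The factors `D` and `r − 1` then cancel against the prefactor, and
`(A_n − i s B)⁻¹ = (A_n + i s B)/(A_n² + B²)`, `n / s = |n|` give `q_n`.
-/

/-- `Θ_i = α_i + i·β_i`. -/
noncomputable def Thi (αi βi : ℝ) : ℂ := (αi : ℂ) + (βi : ℂ) * Complex.I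

/-- `Θ_o = α_o + i·β_o`. -/
noncomputable def Tho (αo βo : ℝ) : ℂ := (αo : ℂ) + (βo : ℂ) * Complex.I

/-- The multiplier `l_n` of equation (36A):
`l_n = (1 − R^{2n})·|Θ_i|² / ((sign(n)·α_i − i·β_i)·(Θ_o + R^{2n}·Θ̄_o))`. -/
noncomputable def lseq (αi αo βi βo R : ℝ) (n : ℤ) : ℂ :=
  (((1 - R ^ (2 * n)) * ‖Thi αi βi‖ ^ 2 : ℝ) : ℂ) /
    (((n.sign : ℂ) * (αi : ℂ) - (βi : ℂ) * Complex.I) *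
      (Tho αo βo + ((R ^ (2 * n) : ℝ) : ℂ) * (starRingEnd ℂ) (Tho αo βo)))

/-- `A_n := sign(n)·((R^{2n}+1)/(R^{2n}−1))·α_o + α_i`. -/
noncomputable def Aseq (αi αo R : ℝ) (n : ℤ) : ℝ :=
  (n.sign : ℝ) * ((R ^ (2 * n) + 1) / (R ^ (2 * n) - 1)) * αo + αi

/-- `μ(n) := |n|·(σ − 2(γ_o − γ_i) − σ·n²)`. -/
noncomputable def museq (σ γi γo : ℝ) (n : ℤ) : ℝ :=
  (|n| : ℝ) * (σ - 2 * (γo - γi) - σ * (n : ℝ) ^ 2)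

/-- `q_n := ((A_n + i·sign(n)·B)/(A_n² + B²))·μ(n)` with `B := β_o − β_i`,
the Fourier symbol (44) of the linearized evolution operator. -/
noncomputable def qseq (αi αo βi βo R σ γi γo : ℝ) (n : ℤ) : ℂ :=
  (((Aseq αi αo R n : ℝ) : ℂ) + Complex.I * (n.sign : ℂ) * ((βo - βi : ℝ) : ℂ)) /
    ((Aseq αi αo R n ^ 2 + (βo - βi) ^ 2 : ℝ) : ℂ) * ((museq σ γi γo n : ℝ) : ℂ)

lemma Int.sign_sq_of_ne_zero {n : ℤ} (hn : n ≠ 0) : (n.sign : ℝ) ^ 2 = 1 := by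
  rcases hn.lt_or_gt with h | h
  · simp [Int.sign_eq_neg_one_of_neg h]
  · simp [Int.sign_eq_one_of_pos h]

lemma zpow_two_mul_ne_one {R : ℝ} (hR : 1 < R) {n : ℤ} (hn : n ≠ 0) : R ^ (2 * n) ≠ 1 := by
  intro h
  have := zpow_right_injective₀ (zero_lt_one.trans hR) hR.ne' (h.trans (zpow_zero R).symm)
  omega

lemma inv_ofReal_sub_I_mul (a b : ℝ) :
    ((a : ℂ) - I * b)⁻¹ = ((a : ℂ) + I * b) / ((a ^ 2 + b ^ 2 : ℝ) : ℂ) := by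
  rw [inv_def, normSq_apply, div_eq_mul_inv]
  simp [sq]

lemma norm_Thi_sq (αi βi : ℝ) : ‖Thi αi βi‖ ^ 2 = αi ^ 2 + βi ^ 2 := by
  rw [Complex.sq_norm, Complex.normSq_apply]
  simp [Thi, sq]

lemma conj_Tho (αo βo : ℝ) : starRingEnd ℂ (Tho αo βo) = αo - βo * I := by
  rw [Tho, map_add, map_mul, conj_ofReal, conj_ofReal, conj_I, mul_neg, sub_eq_add_neg]

lemma Tho_add_mul_conj_ne_zero {αo r : ℝ} (βo : ℝ) (hαo : 0 < αo) (hr : 0 < r) :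
    Tho αo βo + (r : ℂ) * starRingEnd ℂ (Tho αo βo) ≠ 0 := by
  refine ne_zero_of_re_pos ?_
  rw [conj_Tho, Tho]
  simp only [add_re, mul_re, sub_re, ofReal_re, ofReal_im, I_re, I_im]
  nlinarith

lemma sign_mul_Aseq {αi αo R : ℝ} {n : ℤ} (hn : n ≠ 0) (hr : R ^ (2 * n) ≠ 1) :
    n.sign * (R ^ (2 * n) - 1) * Aseq αi αo R n
      = (R ^ (2 * n) + 1) * αo + n.sign * (R ^ (2 * n) - 1) * αi := by
  have hr1 : R ^ (2 * n) - 1 ≠ 0 := sub_ne_zero.mpr hr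
  rw [Aseq]
  field_simp
  linear_combination (R ^ (2 * n) + 1) * αo * Int.sign_sq_of_ne_zero hn

lemma one_sub_lseq {αi αo βi βo R : ℝ} {n : ℤ} (hαi : αi ≠ 0) (hn : n ≠ 0)
    (hD : Tho αo βo + ((R ^ (2 * n) : ℝ) : ℂ) * starRingEnd ℂ (Tho αo βo) ≠ 0)
    (hr : R ^ (2 * n) ≠ 1) :
    1 - lseq αi αo βi βo R n =
      ((n.sign * (R ^ (2 * n) - 1) : ℝ) : ℂ) *
          ((Aseq αi αo R n : ℂ) - I * ((n.sign * (βo - βi) : ℝ) : ℂ)) /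
        (Tho αo βo + ((R ^ (2 * n) : ℝ) : ℂ) * starRingEnd ℂ (Tho αo βo)) := by
  have hs : (n.sign : ℂ) ^ 2 = 1 := by exact_mod_cast Int.sign_sq_of_ne_zero hn
  have hnorm : ((αi ^ 2 + βi ^ 2 : ℝ) : ℂ)
      = ((n.sign : ℂ) * αi - βi * I) * ((n.sign : ℂ) * αi + βi * I) := by
    push_cast
    linear_combination (-(αi : ℂ) ^ 2) * hs + (βi : ℂ) ^ 2 * I_sq
  have hK : (n.sign : ℂ) * αi - βi * I ≠ 0 :=
    left_ne_zero_of_mul (hnorm ▸ ofReal_ne_zero.mpr (by positivity))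
  have hfac : Tho αo βo + ((R ^ (2 * n) : ℝ) : ℂ) * starRingEnd ℂ (Tho αo βo)
        - ((1 - R ^ (2 * n) : ℝ) : ℂ) * ((n.sign : ℂ) * αi + βi * I)
      = ((n.sign * (R ^ (2 * n) - 1) : ℝ) : ℂ) *
          ((Aseq αi αo R n : ℂ) - I * ((n.sign * (βo - βi) : ℝ) : ℂ)) := by
    have hA := congrArg ofReal (sign_mul_Aseq (αi := αi) (αo := αo) hn hr)
    rw [conj_Tho, Tho]
    push_cast at hA ⊢
    linear_combination -hA + ((R : ℂ) ^ (2 * n) - 1) * (βo - βi) * I * hs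
  rw [lseq, norm_Thi_sq, ofReal_mul, hnorm, ← hfac]
  field_simp

lemma qseq_eq_inv_mul (αi αo βi βo R σ γi γo : ℝ) {n : ℤ} (hn : n ≠ 0) :
    qseq αi αo βi βo R σ γi γo n =
      ((Aseq αi αo R n : ℂ) - I * ((n.sign * (βo - βi) : ℝ) : ℂ))⁻¹ * (museq σ γi γo n : ℂ) := by
  rw [qseq, inv_ofReal_sub_I_mul, mul_pow, Int.sign_sq_of_ne_zero hn, one_mul]
  push_cast
  ring

lemma museq_eq_div_sign (σ γi γo : ℝ) {n : ℤ} (hn : n ≠ 0) :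
    n * (2 * (γi - γo) + σ - σ * (n : ℝ) ^ 2) / n.sign = museq σ γi γo n := by
  have hs := Int.sign_sq_of_ne_zero hn
  have hs0 : (n.sign : ℝ) ≠ 0 := fun h => by simp [h] at hs
  rw [div_eq_iff hs0, museq, ← Int.cast_abs, ← Int.sign_mul_self_eq_abs]
  push_cast
  linear_combination (-(n : ℝ) * (2 * (γi - γo) + σ - σ * (n : ℝ) ^ 2)) * hs

theorem statement11_general (αi αo βi βo R σ γi γo : ℝ)
    (hαi : 0 < αi) (hαo : 0 < αo) (hR : 2 ≤ R) :
    ∀ n : ℤ, n ≠ 0 →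
      ((n : ℂ) * ((2 * (γi - γo) + σ - σ * (n : ℝ) ^ 2 : ℝ) : ℂ) *
          ((R ^ (2 * n) - 1 : ℝ) : ℂ) /
          (Tho αo βo + ((R ^ (2 * n) : ℝ) : ℂ) * (starRingEnd ℂ) (Tho αo βo))) *
        (1 - lseq αi αo βi βo R n)⁻¹
      = qseq αi αo βi βo R σ γi γo n := by
  intro n hn
  have hr := zpow_two_mul_ne_one (by linarith) hn
  have hD := Tho_add_mul_conj_ne_zero βo hαo (zpow_pos (by linarith : (0 : ℝ) < R) (2 * n))
  have hscalar : (n : ℂ) * ((2 * (γi - γo) + σ - σ * (n : ℝ) ^ 2 : ℝ) : ℂ) *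
        ((R ^ (2 * n) - 1 : ℝ) : ℂ) / ((n.sign * (R ^ (2 * n) - 1) : ℝ) : ℂ)
      = museq σ γi γo n := by
    rw [← museq_eq_div_sign σ γi γo hn, ← mul_div_mul_right _ _ (sub_ne_zero.mpr hr)]
    push_cast
    rfl
  rw [one_sub_lseq hαi.ne' hn hD hr, inv_div, div_mul_div_cancel₀ hD, qseq_eq_inv_mul _ _ _ _ _ _ _ _ hn,
    ← div_div, div_eq_mul_inv _ (_ - _), hscalar, mul_comm]

/-- For every nonzero integer `n`, the Fourier symbol of the linearized
evolution operator at the trivial state admits the closed form (44):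
`(n·(2(γ_i − γ_o) + σ − σn²)·(R^{2n} − 1)/(Θ_o + R^{2n}·Θ̄_o))·(1 − l_n)⁻¹ = q_n`. -/
theorem statement11 (αi αo βi βo R σ γi γo : ℝ)
    (hαi : 0 < αi) (hαo : 0 < αo) (hβi : 0 ≤ βi) (hβo : 0 ≤ βo) (hR : 2 ≤ R)
    (hσ : 0 < σ) :
    ∀ n : ℤ, n ≠ 0 →
      ((n : ℂ) * ((2 * (γi - γo) + σ - σ * (n : ℝ) ^ 2 : ℝ) : ℂ) *
          ((R ^ (2 * n) - 1 : ℝ) : ℂ) /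
          (Tho αo βo + ((R ^ (2 * n) : ℝ) : ℂ) * (starRingEnd ℂ) (Tho αo βo))) *
        (1 - lseq αi αo βi βo R n)⁻¹
      = qseq αi αo βi βo R σ γi γo n :=
  statement11_general αi αo βi βo R σ γi γo hαi hαo hR
end

section
/- There exist real numbers λ* and c₀ > 0, c₁ > 0, C > 0 such that for every λ ∈ ℂ with Re λ ≥ λ* and every nonzero integer n one has: |λ − q_n| ≥ c₀·|λ|, |λ − q_n| ≥ c₁·|q_n|, and |n|³ ≤ C·|λ − q_n|. -/
/-! Since `(A + i s B) / (A² + B²) = 1 / (A - i s B)` when `s² = 1`, we have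
`q_n = μ(n) / w_n` with `w_n = A_n - i·sign(n)·B`. For `R > 1` the real parts `Re w_n = A_n`
lie in a fixed compact subinterval of `(0, ∞)` and `|w_n|` is bounded, so `|q_n| ≤ K |Re q_n|`
and `|μ(n)| ≲ |Re q_n|`. Moreover `μ(n) + σ|n|³/2` is bounded above, so `Re q_n ≤ M` for some
`M` and `|n|³ ≲ 1 + |Re q_n|`. Once `Re λ ≥ M + 1`, the distance `|λ - q_n| ≥ Re λ - Re q_n`
is at least `1` and dominates `|Re q_n|`, hence also `|q_n|`, `|λ|` and `|n|³`. -/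

open Complex Filter

section RealDiv

variable {μ a W D : ℝ} {w : ℂ}

lemma re_ofReal_div (μ : ℝ) (w : ℂ) : ((μ : ℂ) / w).re = μ * w.re / ‖w‖ ^ 2 := by
  simp [Complex.div_re, Complex.normSq_eq_norm_sq]

lemma abs_re_ofReal_div (μ : ℝ) (hw : 0 ≤ w.re) :
    |((μ : ℂ) / w).re| = |μ| * w.re / ‖w‖ ^ 2 := by
  rw [re_ofReal_div, abs_div, abs_mul, abs_of_nonneg hw, abs_of_nonneg (sq_nonneg ‖w‖)]

lemma norm_ofReal_div_le (ha : 0 < a) (haw : a ≤ w.re) (hW : ‖w‖ ≤ W) :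
    ‖(μ : ℂ) / w‖ ≤ W / a * |((μ : ℂ) / w).re| := by
  have hr : a ≤ ‖w‖ := haw.trans (re_le_norm w)
  have hr0 : 0 < ‖w‖ := ha.trans_le hr
  rw [norm_div, norm_real, Real.norm_eq_abs, abs_re_ofReal_div μ (ha.le.trans haw),
    div_mul_div_comm, le_div_iff₀ (by positivity), div_mul_eq_mul_div, div_le_iff₀ hr0]
  have : ‖w‖ * a ≤ W * w.re := by nlinarith
  nlinarith [mul_nonneg (mul_nonneg (abs_nonneg μ) hr0.le) (sub_nonneg.2 this)]

lemma abs_le_mul_abs_re_ofReal_div (ha : 0 < a) (haw : a ≤ w.re) (hW : ‖w‖ ≤ W) :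
    |μ| ≤ W ^ 2 / a * |((μ : ℂ) / w).re| := by
  have hr : a ≤ ‖w‖ := haw.trans (re_le_norm w)
  have hr0 : 0 < ‖w‖ := ha.trans_le hr
  rw [abs_re_ofReal_div μ (ha.le.trans haw), div_mul_div_comm, le_div_iff₀ (by positivity)]
  have : ‖w‖ ^ 2 * a ≤ W ^ 2 * w.re := by
    have := pow_le_pow_left₀ hr0.le hW 2
    nlinarith
  nlinarith [abs_nonneg μ]

lemma re_ofReal_div_le (ha : 0 < a) (haw : a ≤ w.re) (hD : 0 ≤ D) (hμ : μ ≤ D) :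
    ((μ : ℂ) / w).re ≤ D / a := by
  have hw : 0 < w.re := ha.trans_le haw
  rw [re_ofReal_div]
  rcases le_or_gt μ 0 with hμ0 | hμ0
  · exact (div_nonpos_of_nonpos_of_nonneg (mul_nonpos_of_nonpos_of_nonneg hμ0 hw.le)
      (by positivity)).trans (by positivity)
  · have hsq : w.re ^ 2 ≤ ‖w‖ ^ 2 := pow_le_pow_left₀ hw.le (re_le_norm w) 2
    calc μ * w.re / ‖w‖ ^ 2 ≤ μ * w.re / w.re ^ 2 := by gcongr
      _ = μ / w.re := by field_simp
      _ ≤ D / a := by gcongr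

end RealDiv

section Sector

variable {q lam : ℂ} {M : ℝ}

lemma one_le_norm_sub_and_abs_re_le (hM : 0 ≤ M) (hq : q.re ≤ M) (hlam : M + 1 ≤ lam.re) :
    1 ≤ ‖lam - q‖ ∧ |q.re| ≤ (1 + M) * ‖lam - q‖ := by
  have hE : lam.re - q.re ≤ ‖lam - q‖ := by simpa using re_le_norm (lam - q)
  refine ⟨by linarith, abs_le.mpr ⟨by nlinarith, by nlinarith⟩⟩

lemma norm_le_mul_norm_sub_of_re_le {K L t : ℝ} (hM : 0 ≤ M) (hK : 0 ≤ K) (hL : 0 ≤ L)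
    (hq : q.re ≤ M) (hqK : ‖q‖ ≤ K * |q.re|) (ht : t ≤ L * (1 + |q.re|))
    (hlam : M + 1 ≤ lam.re) :
    ‖lam‖ ≤ (1 + K * (1 + M)) * ‖lam - q‖ ∧ ‖q‖ ≤ K * (1 + M) * ‖lam - q‖ ∧
      t ≤ L * (2 + M) * ‖lam - q‖ := by
  obtain ⟨h1, hre⟩ := one_le_norm_sub_and_abs_re_le hM hq hlam
  have hq' : ‖q‖ ≤ K * (1 + M) * ‖lam - q‖ := by
    calc ‖q‖ ≤ K * |q.re| := hqK
      _ ≤ K * ((1 + M) * ‖lam - q‖) := by gcongr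
      _ = _ := by ring
  refine ⟨?_, hq', ?_⟩
  · calc ‖lam‖ = ‖(lam - q) + q‖ := by rw [sub_add_cancel]
      _ ≤ ‖lam - q‖ + ‖q‖ := norm_add_le _ _
      _ ≤ _ := by linarith
  · calc t ≤ L * (1 + |q.re|) := ht
      _ ≤ L * (‖lam - q‖ + (1 + M) * ‖lam - q‖) := by gcongr
      _ = _ := by ring

end Sector

lemma sign_mul_zpow_ratio_eq_abs {R : ℝ} (hR : 1 < R) (n : ℤ) :
    (n.sign : ℝ) * ((R ^ (2 * n) + 1) / (R ^ (2 * n) - 1)) =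
      (R ^ (2 * |n|) + 1) / (R ^ (2 * |n|) - 1) := by
  rcases lt_trichotomy n 0 with hn | rfl | hn
  · have hx : 1 < R ^ (2 * -n) := one_lt_zpow₀ hR (by omega)
    rw [Int.sign_eq_neg_one_of_neg hn, abs_of_neg hn, show 2 * n = -(2 * -n) by ring, zpow_neg]
    generalize R ^ (2 * -n) = x at hx ⊢
    have hx0 : x ≠ 0 := by positivity
    have hx1 : x - 1 ≠ 0 := (sub_pos.2 hx).ne'
    have hx1' : x⁻¹ - 1 ≠ 0 := (sub_neg.2 (inv_lt_one_of_one_lt₀ hx)).ne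
    rw [Int.cast_neg, Int.cast_one, neg_one_mul, ← neg_div, div_eq_div_iff hx1' hx1]
    field_simp
    ring
  · simp
  · rw [Int.sign_eq_one_of_pos hn, abs_of_pos hn]
    simp

lemma zpow_ratio_mem_Icc {R : ℝ} (hR : 1 < R) {m : ℤ} (hm : 1 ≤ m) :
    (R ^ (2 * m) + 1) / (R ^ (2 * m) - 1) ∈ Set.Icc 1 ((R ^ 2 + 1) / (R ^ 2 - 1)) := by
  have hR2 : 1 < R ^ 2 := one_lt_pow₀ hR two_ne_zero
  have hx : R ^ 2 ≤ R ^ (2 * m) := by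
    exact_mod_cast zpow_le_zpow_right₀ hR.le (by omega : (2 : ℤ) ≤ 2 * m)
  constructor
  · rw [le_div_iff₀ (by linarith)]; linarith
  · rw [div_le_div_iff₀ (by linarith) (by linarith)]; nlinarith

lemma Aseq_mem_Icc {αi αo R : ℝ} (hαo : 0 < αo) (hR : 1 < R) {n : ℤ} (hn : n ≠ 0) :
    Aseq αi αo R n ∈ Set.Icc (αo + αi) ((R ^ 2 + 1) / (R ^ 2 - 1) * αo + αi) := by
  obtain ⟨h1, h2⟩ := zpow_ratio_mem_Icc hR (Int.one_le_abs hn)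
  rw [Aseq, sign_mul_zpow_ratio_eq_abs hR]
  constructor <;> nlinarith

lemma mul_sub_mul_sq_add_le {c σ t : ℝ} (hσ : 0 < σ) (ht : 1 ≤ t) :
    t * (c - σ * t ^ 2) + σ * t ^ 3 / 2 ≤ 2 * c ^ 2 / σ := by
  rw [le_div_iff₀ hσ]
  rcases le_or_gt (2 * |c|) (σ * t ^ 2) with h | h
  · nlinarith [le_abs_self c, abs_nonneg c, sq_nonneg c]
  · have ht0 : 0 ≤ t := by linarith
    have h1 : σ * t ≤ 2 * |c| := by
      nlinarith [mul_le_mul_of_nonneg_left (show t ≤ t ^ 2 by nlinarith) hσ.le]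
    have h2 : c * t ≤ |c| * t := mul_le_mul_of_nonneg_right (le_abs_self c) ht0
    calc (t * (c - σ * t ^ 2) + σ * t ^ 3 / 2) * σ ≤ σ * (c * t) := by
          nlinarith [(by positivity : 0 ≤ σ ^ 2 * t ^ 3)]
      _ ≤ σ * (|c| * t) := by gcongr
      _ = |c| * (σ * t) := by ring
      _ ≤ |c| * (2 * |c|) := by gcongr
      _ = 2 * c ^ 2 := by rw [← sq_abs c]; ring

lemma museq_add_le {σ γi γo : ℝ} (hσ : 0 < σ) {n : ℤ} (hn : n ≠ 0) :
    museq σ γi γo n + σ * (|n| : ℝ) ^ 3 / 2 ≤ 2 * (σ - 2 * (γo - γi)) ^ 2 / σ := by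
  have ht : (1 : ℝ) ≤ |n| := by exact_mod_cast Int.one_le_abs hn
  rw [museq, ← sq_abs (n : ℝ), ← Int.cast_abs]
  exact mul_sub_mul_sq_add_le hσ ht

lemma abs_intCast_sign {n : ℤ} (hn : n ≠ 0) : |(n.sign : ℝ)| = 1 := by
  exact_mod_cast Int.abs_sign_of_ne_zero hn

lemma qseq_eq_div {αi αo βi βo R σ γi γo : ℝ} {n : ℤ} (hn : n ≠ 0)
    (hA : 0 < Aseq αi αo R n) :
    qseq αi αo βi βo R σ γi γo n = (museq σ γi γo n : ℂ) /
      ((Aseq αi αo R n : ℂ) - I * ((n.sign * (βo - βi) : ℝ) : ℂ)) := by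
  have hs : (n.sign : ℂ) ^ 2 = 1 := by
    exact_mod_cast (by rw [← sq_abs, abs_intCast_sign hn, one_pow] : (n.sign : ℝ) ^ 2 = 1)
  have hw : (Aseq αi αo R n : ℂ) - I * ((n.sign * (βo - βi) : ℝ) : ℂ) ≠ 0 := by
    intro h
    simpa [hA.ne'] using congrArg re h
  have hD : ((Aseq αi αo R n ^ 2 + (βo - βi) ^ 2 : ℝ) : ℂ) ≠ 0 := by
    exact_mod_cast (by positivity : (0 : ℝ) < Aseq αi αo R n ^ 2 + (βo - βi) ^ 2).ne'
  rw [qseq, div_mul_eq_mul_div, div_eq_div_iff hD hw]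
  push_cast
  linear_combination
    ((βo - βi : ℂ) ^ 2 * hs - (n.sign : ℂ) ^ 2 * (βo - βi) ^ 2 * I_sq) * (museq σ γi γo n : ℂ)

lemma exists_qseq_bounds {αi αo βi βo R σ γi γo : ℝ} (hαi : 0 < αi) (hαo : 0 < αo)
    (hR : 1 < R) (hσ : 0 < σ) :
    ∃ M K L : ℝ, 0 ≤ M ∧ 0 ≤ K ∧ 0 < L ∧ ∀ n : ℤ, n ≠ 0 →
      (qseq αi αo βi βo R σ γi γo n).re ≤ M ∧
      ‖qseq αi αo βi βo R σ γi γo n‖ ≤ K * |(qseq αi αo βi βo R σ γi γo n).re| ∧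
      (|n| : ℝ) ^ 3 ≤ L * (1 + |(qseq αi αo βi βo R σ γi γo n).re|) := by
  set a := αo + αi
  set W := (R ^ 2 + 1) / (R ^ 2 - 1) * αo + αi + |βo - βi|
  set D := 2 * (σ - 2 * (γo - γi)) ^ 2 / σ
  have ha : 0 < a := by positivity
  have hD : 0 ≤ D := by positivity
  have hW : 0 < W := by
    have : 0 < (R ^ 2 + 1) / (R ^ 2 - 1) := div_pos (by positivity) (by nlinarith)
    positivity
  refine ⟨D / a, W / a, 2 / σ * (D + W ^ 2 / a), by positivity, by positivity, by positivity,
    fun n hn => ?_⟩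
  obtain ⟨haA, hAb⟩ := Aseq_mem_Icc (αi := αi) hαo hR hn
  have hA : 0 < Aseq αi αo R n := ha.trans_le haA
  set w : ℂ := (Aseq αi αo R n : ℂ) - I * ((n.sign * (βo - βi) : ℝ) : ℂ)
  have haw : a ≤ w.re := by simpa [w] using haA
  have hwW : ‖w‖ ≤ W := by
    calc ‖w‖ ≤ ‖(Aseq αi αo R n : ℂ)‖ + ‖I * ((n.sign * (βo - βi) : ℝ) : ℂ)‖ :=
          norm_sub_le _ _
      _ = Aseq αi αo R n + |βo - βi| := by
        rw [norm_mul, norm_I, one_mul, norm_real, norm_real, Real.norm_eq_abs, Real.norm_eq_abs,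
          abs_mul, abs_intCast_sign hn, one_mul, abs_of_pos hA]
      _ ≤ W := by simp only [W]; linarith
  have hμ := museq_add_le (γi := γi) (γo := γo) hσ hn
  rw [qseq_eq_div hn hA]
  refine ⟨re_ofReal_div_le ha haw hD (by nlinarith [pow_nonneg (abs_nonneg (n:ℝ)) 3]),
    norm_ofReal_div_le ha haw hwW, ?_⟩
  set x := |((museq σ γi γo n : ℂ) / w).re|
  have hμx : |museq σ γi γo n| ≤ W ^ 2 / a * x := abs_le_mul_abs_re_ofReal_div ha haw hwW
  have hx : 0 ≤ x := abs_nonneg _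
  have hWa : 0 ≤ W ^ 2 / a := by positivity
  have hcube : σ * (|n| : ℝ) ^ 3 / 2 ≤ (D + W ^ 2 / a) * (1 + x) := by
    nlinarith [neg_abs_le (museq σ γi γo n), mul_nonneg hD hx]
  calc (|n| : ℝ) ^ 3 = 2 / σ * (σ * (|n| : ℝ) ^ 3 / 2) := by field_simp
    _ ≤ 2 / σ * ((D + W ^ 2 / a) * (1 + x)) := by gcongr
    _ = _ := by ring

theorem statement13_general (αi αo βi βo R σ γi γo : ℝ)
    (hαi : 0 < αi) (hαo : 0 < αo) (hR : 2 ≤ R)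
    (hσ : 0 < σ) :
    ∃ (lamStar c₀ c₁ C : ℝ), 0 < c₀ ∧ 0 < c₁ ∧ 0 < C ∧
      ∀ lam : ℂ, lamStar ≤ lam.re → ∀ n : ℤ, n ≠ 0 →
        c₀ * ‖lam‖ ≤ ‖lam - qseq αi αo βi βo R σ γi γo n‖
        ∧ c₁ * ‖qseq αi αo βi βo R σ γi γo n‖
            ≤ ‖lam - qseq αi αo βi βo R σ γi γo n‖
        ∧ (|n| : ℝ) ^ 3 ≤ C * ‖lam - qseq αi αo βi βo R σ γi γo n‖ := by
  obtain ⟨M, K, L, hM, hK, hL, hq⟩ := exists_qseq_bounds (βi := βi) (βo := βo) (γi := γi)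
    (γo := γo) hαi hαo (by linarith : (1 : ℝ) < R) hσ
  have hN : 0 < 1 + K * (1 + M) := by positivity
  refine ⟨M + 1, (1 + K * (1 + M))⁻¹, (1 + K * (1 + M))⁻¹, L * (2 + M), inv_pos.2 hN,
    inv_pos.2 hN, by positivity, fun lam hlam n hn => ?_⟩
  obtain ⟨hqM, hqK, hnL⟩ := hq n hn
  obtain ⟨hlam_le, hq_le, hn_le⟩ := norm_le_mul_norm_sub_of_re_le hM hK hL.le hqM hqK hnL hlam
  refine ⟨(inv_mul_le_iff₀ hN).2 hlam_le, (inv_mul_le_iff₀ hN).2 ?_, hn_le⟩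
  linarith [norm_nonneg (lam - qseq αi αo βi βo R σ γi γo n)]

/-- There are `λ* ∈ ℝ` and constants `c₀, c₁, C > 0` such that for all
`λ ∈ ℂ` with `Re λ ≥ λ*` and all nonzero integers `n`:
`|λ − q_n| ≥ c₀·|λ|`, `|λ − q_n| ≥ c₁·|q_n|`, and `|n|³ ≤ C·|λ − q_n|`. -/
theorem statement13 (αi αo βi βo R σ γi γo : ℝ)
    (hαi : 0 < αi) (hαo : 0 < αo) (hβi : 0 ≤ βi) (hβo : 0 ≤ βo) (hR : 2 ≤ R)
    (hσ : 0 < σ) :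
    ∃ (lamStar c₀ c₁ C : ℝ), 0 < c₀ ∧ 0 < c₁ ∧ 0 < C ∧
      ∀ lam : ℂ, lamStar ≤ lam.re → ∀ n : ℤ, n ≠ 0 →
        c₀ * ‖lam‖ ≤ ‖lam - qseq αi αo βi βo R σ γi γo n‖
        ∧ c₁ * ‖qseq αi αo βi βo R σ γi γo n‖
            ≤ ‖lam - qseq αi αo βi βo R σ γi γo n‖
        ∧ (|n| : ℝ) ^ 3 ≤ C * ‖lam - qseq αi αo βi βo R σ γi γo n‖ :=
  statement13_general αi αo βi βo R σ γi γo hαi hαo hR hσ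
end

section
/- Let λ ∈ ℂ satisfy Re λ > max(0, sup_{n ∈ ℤ \ {0}} Re q_n), and set Q_n^λ := (λ − q_n)^{−1} (with q_0 := 0). Then sup_{n ∈ ℤ \ {0}} |n|⁴ · | Q_{n+1}^λ − Q_n^λ | < ∞. -/
open Complex Filter

/-- The extension of the sequence `q` by `q_0 := 0`. -/
noncomputable def qseq0 (αi αo βi βo R σ γi γo : ℝ) (n : ℤ) : ℂ :=
  if n = 0 then 0 else qseq αi αo βi βo R σ γi γo n

/-! Since `sign(n)² = 1`, `q_n = μ(n) / D_n` with `D_n := A_n − i·sign(n)·B`. Bernoulli's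
inequality `R^{2|n|} ≥ 1 + 3|n|` gives `A_n = α_i + α_o + O(1/n)`, so `D_n` is bounded, bounded
away from `0`, and `D_n⁻¹` varies by `O(1/n)`. Together with `μ(n) ≍ n³` and
`μ(n+1) − μ(n) = O(n²)` this yields `|q_n| ≳ |n|³` and `q_{n+1} − q_n = O(n²)`, hence
`Q_{n+1} − Q_n = −(q_{n+1} − q_n)·Q_{n+1}·Q_n = O(n² · n⁻³ · n⁻³)` along the cofinite filter;
the finitely many remaining `n` do not affect boundedness. -/

open Asymptotics

lemma tendsto_add_one_cofinite : Tendsto (fun n : ℤ => n + 1) cofinite cofinite :=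
  (add_left_injective 1).tendsto_cofinite

lemma tendsto_norm_intCast_cofinite : Tendsto (fun n : ℤ => ‖(n : ℝ)‖) cofinite atTop :=
  tendsto_norm_cocompact_atTop.comp Int.tendsto_coe_cofinite

lemma isBigO_inv_pow_comp_add_one {E : Type*} [Norm E] {f : ℤ → E} {k : ℕ}
    (h : f =O[cofinite] fun n => (n : ℝ)⁻¹ ^ k) :
    (fun n => f (n + 1)) =O[cofinite] fun n => (n : ℝ)⁻¹ ^ k := by
  have hinv : (fun n : ℤ => ((n : ℝ) + 1)⁻¹) =O[cofinite] fun n => (n : ℝ)⁻¹ := by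
    refine IsBigO.of_bound 2 ?_
    filter_upwards [eventually_cofinite_ne 0, eventually_cofinite_ne (-1)] with n h0 h1
    have hn : (1 : ℝ) ≤ |(n : ℝ)| := by exact_mod_cast Int.one_le_abs h0
    have hn1 : (1 : ℝ) ≤ |(n : ℝ) + 1| := by exact_mod_cast Int.one_le_abs (by omega : n + 1 ≠ 0)
    have htri : |(n : ℝ)| ≤ 1 + |(n : ℝ) + 1| := by
      simpa using abs_sub_le (n : ℝ) ((n : ℝ) + 1) 0
    rw [norm_inv, norm_inv, Real.norm_eq_abs, Real.norm_eq_abs, ← div_eq_mul_inv,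
      inv_le_comm₀ (by positivity) (by positivity), inv_div, div_le_iff₀ (by norm_num)]
    linarith
  refine (h.comp_tendsto tendsto_add_one_cofinite).trans ?_
  simpa [Function.comp_def] using hinv.pow k

lemma Asymptotics.IsBigO.const_sub_right {α E F : Type*} [NormedAddCommGroup E]
    [NormedAddCommGroup F] {l : Filter α} {g : α → E} {f : α → F}
    (hg : Tendsto (fun x => ‖g x‖) l atTop) (h : g =O[l] f) (c : F) :
    g =O[l] fun x => c - f x := by
  have hc : (fun _ => c) =o[l] f := (isLittleO_const_left.2 (Or.inr hg)).trans_isBigO h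
  exact (h.trans (isBigO_neg_right.2 hc.right_isBigO_sub)).congr_right fun x => neg_sub _ _

lemma isBigO_inv_comp_add_one_sub_inv {𝕜 : Type*} [NormedField 𝕜] {z : ℤ → 𝕜} {p q : ℕ}
    (hΔ : (fun n => z (n + 1) - z n) =O[cofinite] fun n : ℤ => (n : ℝ) ^ p)
    (hz : (fun n : ℤ => (n : ℝ) ^ q) =O[cofinite] z) :
    (fun n => (z (n + 1))⁻¹ - (z n)⁻¹) =O[cofinite]
      fun n : ℤ => (n : ℝ) ^ p * (n : ℝ)⁻¹ ^ (2 * q) := by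
  have hpow : ∀ᶠ n : ℤ in cofinite, (n : ℝ) ^ q ≠ 0 :=
    (eventually_cofinite_ne 0).mono fun n hn => pow_ne_zero _ (Int.cast_ne_zero.2 hn)
  have hz0 : ∀ᶠ n in cofinite, z n ≠ 0 :=
    (hz.eq_zero_imp.and hpow).mono fun n h h0 => h.2 (h.1 h0)
  have hinv : (fun n => (z n)⁻¹) =O[cofinite] fun n => (n : ℝ)⁻¹ ^ q := by
    simpa only [inv_pow] using hz.inv_rev (hpow.mono fun n h h0 => absurd h0 h)
  have hsub : (fun n => -((z (n + 1) - z n) * (z (n + 1))⁻¹ * (z n)⁻¹)) =ᶠ[cofinite]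
      fun n => (z (n + 1))⁻¹ - (z n)⁻¹ := by
    filter_upwards [tendsto_add_one_cofinite.eventually hz0, hz0] with n h1 h0
    rw [inv_sub_inv' h1 h0]
    ring
  refine ((hΔ.mul (isBigO_inv_pow_comp_add_one hinv)).mul hinv).neg_left.congr' hsub ?_
  exact Eventually.of_forall fun n => by ring

lemma sign_mul_coth_eq {R : ℝ} (hR : R ≠ 0) {n : ℤ} (hn : n ≠ 0) :
    (n.sign : ℝ) * ((R ^ (2 * n) + 1) / (R ^ (2 * n) - 1)) =
      ((R ^ 2) ^ n.natAbs + 1) / ((R ^ 2) ^ n.natAbs - 1) := by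
  rcases hn.lt_or_gt with hneg | hpos
  · have h : R ^ (2 * n) = ((R ^ 2) ^ n.natAbs)⁻¹ := by
      rw [zpow_mul, ← zpow_natCast, ← zpow_neg, Int.ofNat_natAbs_of_nonpos hneg.le, neg_neg]
      norm_cast
    have hy : (R ^ 2) ^ n.natAbs ≠ 0 := by positivity
    rw [h, Int.sign_eq_neg_one_of_neg hneg, inv_eq_one_div, div_add_one hy, div_sub_one hy,
      div_div_div_cancel_right₀ hy, ← neg_sub, div_neg]
    push_cast
    ring
  · have h : R ^ (2 * n) = (R ^ 2) ^ n.natAbs := by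
      rw [zpow_mul, ← zpow_natCast, Int.natAbs_of_nonneg hpos.le]
      norm_cast
    rw [h, Int.sign_eq_one_of_pos hpos]
    simp

lemma Aseq_bounds {αi αo R : ℝ} (hR : 2 ≤ R) (hαo : 0 ≤ αo) {n : ℤ} (hn : n ≠ 0) :
    αi + αo ≤ Aseq αi αo R n ∧ Aseq αi αo R n ≤ αi + αo + αo * |(n : ℝ)|⁻¹ := by
  have hm : (1 : ℝ) ≤ n.natAbs := by exact_mod_cast Int.natAbs_pos.2 hn
  have hpow : 1 + (n.natAbs : ℝ) * 3 ≤ (R ^ 2) ^ n.natAbs :=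
    (one_add_mul_le_pow (by norm_num) _).trans
      (pow_le_pow_left₀ (by norm_num) (by nlinarith) _)
  set y := (R ^ 2) ^ n.natAbs
  have hy : y - 1 ≠ 0 := by nlinarith
  have hcoth : (y + 1) / (y - 1) = 1 + 2 / (y - 1) := by
    field_simp
    ring
  have hε : 2 / (y - 1) ≤ |(n : ℝ)|⁻¹ := by
    rw [← Int.cast_abs, ← Nat.cast_natAbs, div_le_iff₀ (by linarith)]
    field_simp
    nlinarith
  have hε0 : 0 ≤ 2 / (y - 1) := div_nonneg (by norm_num) (by linarith)
  rw [Aseq, sign_mul_coth_eq (by positivity) hn, hcoth]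
  constructor <;> nlinarith

lemma isBigO_Aseq_comp_add_one_sub {αi αo R : ℝ} (hR : 2 ≤ R) (hαo : 0 ≤ αo) :
    (fun n => Aseq αi αo R (n + 1) - Aseq αi αo R n) =O[cofinite] fun n : ℤ => (n : ℝ)⁻¹ := by
  have h : (fun n => Aseq αi αo R n - (αi + αo)) =O[cofinite] fun n : ℤ => (n : ℝ)⁻¹ ^ 1 := by
    refine IsBigO.of_bound αo ?_
    filter_upwards [eventually_cofinite_ne 0] with n hn
    obtain ⟨hlow, hup⟩ := Aseq_bounds hR hαo (αi := αi) hn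
    rw [Real.norm_of_nonneg (by linarith), pow_one, norm_inv, Real.norm_eq_abs]
    linarith
  have h1 := isBigO_inv_pow_comp_add_one h
  simp only [pow_one] at h h1
  exact (h1.sub h).congr_left fun n => by ring

noncomputable def Dseq (αi αo βi βo R : ℝ) (n : ℤ) : ℂ :=
  (Aseq αi αo R n : ℂ) - I * (n.sign : ℂ) * ((βo - βi : ℝ) : ℂ)

section Dseq

variable {αi αo βi βo R : ℝ}

lemma le_norm_Dseq (hR : 2 ≤ R) (hαo : 0 ≤ αo) {n : ℤ} (hn : n ≠ 0) :
    αi + αo ≤ ‖Dseq αi αo βi βo R n‖ := by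
  refine (Aseq_bounds hR hαo hn).1.trans ?_
  simpa [Dseq] using re_le_norm (Dseq αi αo βi βo R n)

lemma norm_Dseq_le (hR : 2 ≤ R) (hαo : 0 ≤ αo) (ha : 0 < αi + αo) {n : ℤ} (hn : n ≠ 0) :
    ‖Dseq αi αo βi βo R n‖ ≤ αi + 2 * αo + |βo - βi| := by
  obtain ⟨hlow, hup⟩ := Aseq_bounds (αi := αi) hR hαo hn
  have hn1 : |(n : ℝ)|⁻¹ ≤ 1 := inv_le_one_of_one_le₀ (by exact_mod_cast Int.one_le_abs hn)
  have hsign : ‖(n.sign : ℂ)‖ = 1 := by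
    rcases hn.lt_or_gt with h | h
    · simp [Int.sign_eq_neg_one_of_neg h]
    · simp [Int.sign_eq_one_of_pos h]
  calc ‖Dseq αi αo βi βo R n‖
      ≤ ‖(Aseq αi αo R n : ℂ)‖ + ‖I * (n.sign : ℂ) * ((βo - βi : ℝ) : ℂ)‖ := norm_sub_le _ _
    _ = Aseq αi αo R n + |βo - βi| := by
      rw [norm_mul, norm_mul, hsign, norm_real, norm_real, norm_I,
        Real.norm_of_nonneg (by linarith), Real.norm_eq_abs, one_mul, one_mul]
    _ ≤ αi + 2 * αo + |βo - βi| := by nlinarith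

lemma isBigO_Dseq_inv (hR : 2 ≤ R) (hαo : 0 ≤ αo) (ha : 0 < αi + αo) :
    (fun n => (Dseq αi αo βi βo R n)⁻¹) =O[cofinite] fun _ => (1 : ℝ) := by
  refine IsBigO.of_bound (αi + αo)⁻¹ ?_
  filter_upwards [eventually_cofinite_ne 0] with n hn
  rw [norm_inv, norm_one, mul_one]
  exact inv_anti₀ ha (le_norm_Dseq hR hαo hn)

lemma isBigO_one_Dseq_inv (hR : 2 ≤ R) (hαo : 0 ≤ αo) (ha : 0 < αi + αo) :
    (fun _ => (1 : ℝ)) =O[cofinite] fun n => (Dseq αi αo βi βo R n)⁻¹ := by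
  refine IsBigO.of_bound (αi + 2 * αo + |βo - βi|) ?_
  filter_upwards [eventually_cofinite_ne 0] with n hn
  have hpos : 0 < ‖Dseq αi αo βi βo R n‖ := ha.trans_le (le_norm_Dseq hR hαo hn)
  rw [norm_inv, norm_one, ← div_eq_mul_inv, one_le_div hpos]
  exact norm_Dseq_le hR hαo ha hn

lemma isBigO_Dseq_inv_comp_add_one_sub (hR : 2 ≤ R) (hαo : 0 ≤ αo) (ha : 0 < αi + αo) :
    (fun n => (Dseq αi αo βi βo R (n + 1))⁻¹ - (Dseq αi αo βi βo R n)⁻¹) =O[cofinite]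
      fun n : ℤ => (n : ℝ)⁻¹ := by
  have hD : ∀ n : ℤ, n ≠ 0 → Dseq αi αo βi βo R n ≠ 0 := fun n hn =>
    norm_pos_iff.1 (ha.trans_le (le_norm_Dseq hR hαo hn))
  have hsub : (fun n => -(((Aseq αi αo R (n + 1) - Aseq αi αo R n : ℝ) : ℂ) *
      (Dseq αi αo βi βo R (n + 1))⁻¹ * (Dseq αi αo βi βo R n)⁻¹)) =ᶠ[cofinite]
      fun n => (Dseq αi αo βi βo R (n + 1))⁻¹ - (Dseq αi αo βi βo R n)⁻¹ := by
    filter_upwards [eventually_cofinite_ne 0, eventually_cofinite_ne (-1)] with n h0 h1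
    have hsign : (n + 1).sign = n.sign := by
      rcases h0.lt_or_gt with h | h
      · rw [Int.sign_eq_neg_one_of_neg h, Int.sign_eq_neg_one_of_neg (by omega)]
      · rw [Int.sign_eq_one_of_pos h, Int.sign_eq_one_of_pos (by omega)]
    rw [inv_sub_inv' (hD _ (by omega)) (hD n h0), Dseq, Dseq, hsign]
    push_cast
    ring
  refine ((((isBigO_ofReal_left.2 (isBigO_Aseq_comp_add_one_sub hR hαo)).mul
    (isBigO_Dseq_inv hR hαo ha |>.comp_tendsto tendsto_add_one_cofinite)).mul
    (isBigO_Dseq_inv hR hαo ha)).neg_left.congr' hsub ?_)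
  exact Eventually.of_forall fun n => by simp

end Dseq

section museq

variable (σ γi γo : ℝ)

lemma abs_museq (n : ℤ) :
    |museq σ γi γo n| = |(n : ℝ)| * |σ - 2 * (γo - γi) - σ * |(n : ℝ)| ^ 2| := by
  rw [museq, abs_mul, abs_abs, sq_abs]

lemma isBigO_museq : (fun n => museq σ γi γo n) =O[cofinite] fun n : ℤ => (n : ℝ) ^ 3 := by
  refine IsBigO.of_bound (|σ - 2 * (γo - γi)| + |σ|) ?_
  filter_upwards [eventually_cofinite_ne 0] with n hn
  have ht : 1 ≤ |(n : ℝ)| := by exact_mod_cast Int.one_le_abs hn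
  rw [Real.norm_eq_abs, Real.norm_eq_abs, abs_museq, abs_pow]
  set c := σ - 2 * (γo - γi)
  set t := |(n : ℝ)|
  have hc : |c - σ * t ^ 2| ≤ |c| + |σ| * t ^ 2 :=
    (abs_sub c _).trans_eq (by rw [abs_mul, abs_of_nonneg (by positivity : 0 ≤ t ^ 2)])
  calc t * |c - σ * t ^ 2| ≤ t * (|c| + |σ| * t ^ 2) := by gcongr
    _ = |c| * t + |σ| * t ^ 3 := by ring
    _ ≤ |c| * t ^ 3 + |σ| * t ^ 3 := by gcongr; exact le_self_pow₀ ht (by norm_num)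
    _ = (|c| + |σ|) * t ^ 3 := by ring

lemma isBigO_pow_three_museq (hσ : σ ≠ 0) :
    (fun n : ℤ => (n : ℝ) ^ 3) =O[cofinite] fun n => museq σ γi γo n := by
  have hσ' : 0 < |σ| := abs_pos.2 hσ
  refine IsBigO.of_bound (2 / |σ|) ?_
  filter_upwards [tendsto_norm_intCast_cofinite.eventually_ge_atTop
    (max 1 (2 * |σ - 2 * (γo - γi)| / |σ|))] with n hn
  rw [Real.norm_eq_abs] at hn
  rw [Real.norm_eq_abs, Real.norm_eq_abs, abs_museq, abs_pow, div_mul_eq_mul_div,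
    le_div_iff₀' hσ']
  set c := σ - 2 * (γo - γi)
  set t := |(n : ℝ)|
  have ht : 1 ≤ t := (le_max_left _ _).trans hn
  have htc : 2 * |c| ≤ |σ| * t ^ 2 := by
    rw [← div_le_iff₀' hσ']
    exact (le_max_right _ _).trans (hn.trans (le_self_pow₀ ht (by norm_num)))
  have hdom : |σ| * t ^ 2 - |c| ≤ |c - σ * t ^ 2| := by
    have := abs_sub_abs_le_abs_sub (σ * t ^ 2) c
    rw [abs_mul, abs_pow, abs_of_nonneg (by positivity : 0 ≤ t), ← abs_neg (σ * t ^ 2 - c),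
      neg_sub] at this
    linarith
  calc |σ| * t ^ 3 ≤ 2 * (t * (|σ| * t ^ 2 - |c|)) := by
        nlinarith [mul_nonneg (by positivity : 0 ≤ t) (sub_nonneg.2 htc)]
    _ ≤ 2 * (t * |c - σ * t ^ 2|) := by gcongr

lemma abs_museq_add_one_sub (n : ℤ) :
    |museq σ γi γo (n + 1) - museq σ γi γo n| =
      |σ - 2 * (γo - γi) - σ * (3 * (n : ℝ) ^ 2 + 3 * n + 1)| := by
  simp only [museq]
  push_cast
  rcases le_or_gt 0 n with h | h
  · have h' : (0 : ℝ) ≤ n := by exact_mod_cast h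
    rw [abs_of_nonneg (by linarith : (0 : ℝ) ≤ n + 1), abs_of_nonneg h']
    ring_nf
  · have h' : (n : ℝ) + 1 ≤ 0 := by exact_mod_cast (show n + 1 ≤ 0 by omega)
    rw [abs_of_nonpos h', abs_of_neg (by linarith : (n : ℝ) < 0), ← abs_neg]
    ring_nf

lemma isBigO_museq_comp_add_one_sub :
    (fun n => museq σ γi γo (n + 1) - museq σ γi γo n) =O[cofinite] fun n : ℤ => (n : ℝ) ^ 2 := by
  refine IsBigO.of_bound (|σ - 2 * (γo - γi)| + 7 * |σ|) ?_
  filter_upwards [eventually_cofinite_ne 0] with n hn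
  have ht : (1 : ℝ) ≤ |(n : ℝ)| := by exact_mod_cast Int.one_le_abs hn
  rw [Real.norm_eq_abs, Real.norm_eq_abs, abs_museq_add_one_sub, abs_of_nonneg (sq_nonneg (n : ℝ))]
  set c := σ - 2 * (γo - γi)
  have hpoly : |3 * (n : ℝ) ^ 2 + 3 * n + 1| ≤ 7 * (n : ℝ) ^ 2 := by
    rw [abs_le]
    constructor <;> nlinarith [neg_abs_le (n : ℝ), le_abs_self (n : ℝ), sq_abs (n : ℝ)]
  have hc1 : |c| ≤ |c| * (n : ℝ) ^ 2 :=
    le_mul_of_one_le_right (abs_nonneg c) (by nlinarith [sq_abs (n : ℝ)])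
  calc |c - σ * (3 * (n : ℝ) ^ 2 + 3 * n + 1)|
      ≤ |c| + |σ| * |3 * (n : ℝ) ^ 2 + 3 * n + 1| := by
        rw [← abs_mul]; exact abs_sub _ _
    _ ≤ |c| * (n : ℝ) ^ 2 + |σ| * (7 * (n : ℝ) ^ 2) := by gcongr
    _ = (|c| + 7 * |σ|) * (n : ℝ) ^ 2 := by ring

end museq

section qseq

variable {αi αo βi βo R σ γi γo : ℝ}

lemma qseq0_eq_museq_div (hR : 2 ≤ R) (hαo : 0 ≤ αo) (ha : 0 < αi + αo) (n : ℤ) :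
    qseq0 αi αo βi βo R σ γi γo n = museq σ γi γo n / Dseq αi αo βi βo R n := by
  rcases eq_or_ne n 0 with rfl | hn
  · simp [qseq0, museq]
  have hA := (Aseq_bounds (αi := αi) hR hαo hn).1
  have hD : Dseq αi αo βi βo R n ≠ 0 := norm_pos_iff.1 (ha.trans_le (le_norm_Dseq hR hαo hn))
  have hN : ((Aseq αi αo R n ^ 2 + (βo - βi) ^ 2 : ℝ) : ℂ) ≠ 0 := by
    exact_mod_cast (add_pos_of_pos_of_nonneg (pow_pos (ha.trans_le hA) 2) (sq_nonneg _)).ne'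
  have hs : (n.sign : ℂ) ^ 2 = 1 := by
    rcases hn.lt_or_gt with h | h
    · simp [Int.sign_eq_neg_one_of_neg h]
    · simp [Int.sign_eq_one_of_pos h]
  rw [qseq0, if_neg hn, qseq, div_mul_eq_mul_div, div_eq_div_iff hN hD, Dseq]
  push_cast
  linear_combination (museq σ γi γo n : ℂ) * ((βo : ℂ) - βi) ^ 2 * (hs - (n.sign : ℂ) ^ 2 * I_sq)

lemma isBigO_qseq0_comp_add_one_sub (hR : 2 ≤ R) (hαo : 0 ≤ αo) (ha : 0 < αi + αo) :
    (fun n => qseq0 αi αo βi βo R σ γi γo (n + 1) - qseq0 αi αo βi βo R σ γi γo n)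
      =O[cofinite] fun n : ℤ => (n : ℝ) ^ 2 := by
  simp only [qseq0_eq_museq_div hR hαo ha]
  have hsplit : ∀ n : ℤ, ((museq σ γi γo (n + 1) - museq σ γi γo n : ℝ) : ℂ) *
      (Dseq αi αo βi βo R (n + 1))⁻¹ + (museq σ γi γo n : ℂ) *
      ((Dseq αi αo βi βo R (n + 1))⁻¹ - (Dseq αi αo βi βo R n)⁻¹) =
      museq σ γi γo (n + 1) / Dseq αi αo βi βo R (n + 1) -
        museq σ γi γo n / Dseq αi αo βi βo R n := by
    intro n
    push_cast
    ring
  have hμΔ : (fun n => ((museq σ γi γo (n + 1) - museq σ γi γo n : ℝ) : ℂ) *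
      (Dseq αi αo βi βo R (n + 1))⁻¹) =O[cofinite] fun n : ℤ => (n : ℝ) ^ 2 := by
    simpa only [Function.comp_def, mul_one] using
      (isBigO_ofReal_left.2 (isBigO_museq_comp_add_one_sub σ γi γo)).mul
        ((isBigO_Dseq_inv hR hαo ha).comp_tendsto tendsto_add_one_cofinite)
  have hDΔ : (fun n => (museq σ γi γo n : ℂ) *
      ((Dseq αi αo βi βo R (n + 1))⁻¹ - (Dseq αi αo βi βo R n)⁻¹))
      =O[cofinite] fun n : ℤ => (n : ℝ) ^ 2 := by
    refine ((isBigO_ofReal_left.2 (isBigO_museq σ γi γo)).mul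
      (isBigO_Dseq_inv_comp_add_one_sub hR hαo ha)).congr_right fun n => ?_
    rcases eq_or_ne (n : ℝ) 0 with h | h
    · simp [h]
    · field_simp
  exact (hμΔ.add hDΔ).congr_left hsplit

lemma isBigO_pow_three_qseq0 (hR : 2 ≤ R) (hαo : 0 ≤ αo) (ha : 0 < αi + αo) (hσ : σ ≠ 0) :
    (fun n : ℤ => (n : ℝ) ^ 3) =O[cofinite] qseq0 αi αo βi βo R σ γi γo := by
  have h := (isBigO_ofReal_right.2 (isBigO_pow_three_museq σ γi γo hσ)).mul
    (isBigO_one_Dseq_inv (βi := βi) (βo := βo) hR hαo ha)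
  simpa only [mul_one, ← div_eq_mul_inv, ← qseq0_eq_museq_div hR hαo ha] using h

end qseq

theorem statement15_general (αi αo βi βo R σ γi γo : ℝ)
    (hαi : 0 < αi) (hαo : 0 < αo) (hR : 2 ≤ R)
    (hσ : 0 < σ) (lam : ℂ) :
    ∃ C : ℝ, ∀ n : ℤ, n ≠ 0 →
      (|n| : ℝ) ^ 4 * ‖(lam - qseq0 αi αo βi βo R σ γi γo (n + 1))⁻¹
        - (lam - qseq0 αi αo βi βo R σ γi γo n)⁻¹‖ ≤ C := by
  have ha : 0 < αi + αo := by linarith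
  have hΔ : (fun n => (lam - qseq0 αi αo βi βo R σ γi γo (n + 1)) -
      (lam - qseq0 αi αo βi βo R σ γi γo n)) =O[cofinite] fun n : ℤ => (n : ℝ) ^ 2 :=
    (isBigO_qseq0_comp_add_one_sub hR hαo.le ha).neg_left.congr_left fun n => by ring
  have hz : (fun n : ℤ => (n : ℝ) ^ 3) =O[cofinite]
      fun n => lam - qseq0 αi αo βi βo R σ γi γo n :=
    (isBigO_pow_three_qseq0 hR hαo.le ha hσ.ne').const_sub_right
      (((tendsto_pow_atTop three_ne_zero).comp tendsto_norm_intCast_cofinite).congr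
        fun n => (norm_pow _ _).symm) lam
  have hbdd : (fun n : ℤ => (|n| : ℝ) ^ 4 * ‖(lam - qseq0 αi αo βi βo R σ γi γo (n + 1))⁻¹
      - (lam - qseq0 αi αo βi βo R σ γi γo n)⁻¹‖)
      =O[cofinite] fun _ => (1 : ℝ) := by
    refine ((isBigO_refl (fun n : ℤ => (|n| : ℝ) ^ 4) _).mul
      (isBigO_inv_comp_add_one_sub_inv hΔ hz).norm_left).trans (EventuallyEq.isBigO ?_)
    filter_upwards [eventually_cofinite_ne 0] with n hn
    have : (n : ℝ) ≠ 0 := Int.cast_ne_zero.2 hn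
    rw [Even.pow_abs ⟨2, rfl⟩, inv_pow, ← mul_assoc, ← pow_add]
    exact mul_inv_cancel₀ (pow_ne_zero _ this)
  obtain ⟨C, hC⟩ := ((isBigO_one_iff ℝ).1 hbdd).bddAbove_range_of_cofinite
  exact ⟨C, fun n _ => (Real.le_norm_self _).trans (hC ⟨n, rfl⟩)⟩

/-- For `λ ∈ ℂ` with `Re λ > max(0, sup_{n ≠ 0} Re q_n)` and
`Q_n^λ := (λ − q_n)⁻¹` (with `q_0 := 0`), one has
`sup_{n ≠ 0} |n|⁴·|Q_{n+1}^λ − Q_n^λ| < ∞`. -/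
theorem statement15 (αi αo βi βo R σ γi γo : ℝ)
    (hαi : 0 < αi) (hαo : 0 < αo) (hβi : 0 ≤ βi) (hβo : 0 ≤ βo) (hR : 2 ≤ R)
    (hσ : 0 < σ) (lam : ℂ)
    (hlam : max 0 (sSup {x : ℝ | ∃ n : ℤ, n ≠ 0 ∧
        x = (qseq0 αi αo βi βo R σ γi γo n).re}) < lam.re) :
    ∃ C : ℝ, ∀ n : ℤ, n ≠ 0 →
      (|n| : ℝ) ^ 4 * ‖(lam - qseq0 αi αo βi βo R σ γi γo (n + 1))⁻¹
        - (lam - qseq0 αi αo βi βo R σ γi γo n)⁻¹‖ ≤ C :=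
  statement15_general αi αo βi βo R σ γi γo hαi hαo hR hσ lam
end

section
/- There exists λ* ∈ ℝ such that, with S_n^λ := λ·(λ − q_n)^{−1} (and q_0 := 0), all three suprema taken over nonzero integers n and over λ ∈ ℂ with Re λ ≥ λ* are finite: sup |S_n^λ| < ∞, sup |n|·|S_{n+1}^λ − S_n^λ| < ∞, and sup |n|²·|S_{n+2}^λ − 2·S_{n+1}^λ + S_n^λ| < ∞. -/
open Complex Filter

open scoped ComplexConjugate

/-!
For `m ≥ 1` we have `q_m = μ(m) / (A_m - iB)`, and `A_m → α_o + α_i` at the rate `R^{-2m}`,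
which beats the cubic growth of `μ(m)`. Hence on `m ≥ 0` the symbol differs by a bounded
sequence from the cubic polynomial `m (σ - 2(γ_o - γ_i) - σ m²) / (α_o + α_i - iB)`, and
`q_{-m} = conj q_m`. This gives the discrete symbol estimates `|Δʲ q_n| ≲ (1 + |n|)^(3 - j)`
for `j = 0, 1, 2`, and `Re q_n ≤ M - c (1 + |n|)³`, so that `Re (λ - q_n) ≥ c (1 + |n|)³`
once `Re λ ≥ M`. For such `λ`, `S_n = 1 + q_n / (λ - q_n)` is bounded, and the identities
`S_{n+1} - S_n = S_{n+1} Δq_n / (λ - q_n)` and its second-order analogue gain a factor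
`(1 + |n|)⁻¹` with each difference.
-/

def SymbolBoundAt (q : ℤ → ℂ) (K : ℝ) (n : ℤ) : Prop :=
  ‖q n‖ ≤ K * (1 + |(n : ℝ)|) ^ 3 ∧ ‖q (n + 1) - q n‖ ≤ K * (1 + |(n : ℝ)|) ^ 2 ∧
    ‖q (n + 2) - 2 * q (n + 1) + q n‖ ≤ K * (1 + |(n : ℝ)|)

lemma symbolBoundAt_cubic {σ : ℝ} (hσ : 0 ≤ σ) (d : ℝ) (z : ℂ) (n : ℤ) :
    SymbolBoundAt (fun k : ℤ => (((k : ℝ) * (d - σ * (k : ℝ) ^ 2) : ℝ) : ℂ) * z)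
      ((|d| + 7 * σ) * ‖z‖) n := by
  set x := |(n : ℝ)|
  have hx : 0 ≤ x := abs_nonneg _
  have hnx : (n : ℝ) ^ 2 = x ^ 2 := (sq_abs _).symm
  have hn : -x ≤ n ∧ (n : ℝ) ≤ x := abs_le.mp le_rfl
  have hd : -|d| ≤ d ∧ d ≤ |d| := abs_le.mp le_rfl
  have hreal (r K : ℝ) (h : |r| ≤ K) : ‖(r : ℂ) * z‖ ≤ K * ‖z‖ := by
    rw [norm_mul, Complex.norm_real, Real.norm_eq_abs]; gcongr
  refine ⟨?_, ?_, ?_⟩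
  · refine (hreal _ _ ?_).trans_eq (mul_right_comm _ _ _)
    rw [abs_mul]
    calc x * |d - σ * (n : ℝ) ^ 2| ≤ x * (|d| + σ * x ^ 2) := by
          gcongr; exact abs_le.mpr ⟨by nlinarith, by nlinarith⟩
      _ ≤ (|d| + 7 * σ) * (1 + x) ^ 3 := by
          nlinarith [mul_nonneg (abs_nonneg d) hx, mul_nonneg hσ hx]
  · rw [← sub_mul, ← Complex.ofReal_sub]
    refine (hreal _ _ ?_).trans_eq (mul_right_comm _ _ _)
    push_cast
    exact abs_le.mpr ⟨by nlinarith, by nlinarith⟩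
  · rw [show ∀ a b c : ℝ, (a : ℂ) * z - 2 * ((b : ℂ) * z) + (c : ℂ) * z
      = ((a - 2 * b + c : ℝ) : ℂ) * z by intros; push_cast; ring]
    refine (hreal _ _ ?_).trans_eq (mul_right_comm _ _ _)
    push_cast
    exact abs_le.mpr ⟨by nlinarith, by nlinarith⟩

lemma SymbolBoundAt.add {p e : ℤ → ℂ} {K M : ℝ} {n : ℤ} (hp : SymbolBoundAt p K n)
    (he : ∀ k, n ≤ k → k ≤ n + 2 → ‖e k‖ ≤ M) : SymbolBoundAt (p + e) (K + 4 * M) n := by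
  have hM : 0 ≤ M := (norm_nonneg _).trans (he n le_rfl (by omega))
  have e0 := he n le_rfl (by omega)
  have e1 := he (n + 1) (by omega) (by omega)
  have e2 := he (n + 2) (by omega) le_rfl
  have hw : 1 ≤ 1 + |(n : ℝ)| := le_add_of_nonneg_right (abs_nonneg _)
  have hw2 : 1 ≤ (1 + |(n : ℝ)|) ^ 2 := one_le_pow₀ hw
  have hw3 : 1 ≤ (1 + |(n : ℝ)|) ^ 3 := one_le_pow₀ hw
  obtain ⟨h0, h1, h2⟩ := hp
  refine ⟨?_, ?_, ?_⟩ <;> simp only [Pi.add_apply]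
  · calc ‖p n + e n‖ ≤ ‖p n‖ + ‖e n‖ := norm_add_le _ _
      _ ≤ (K + 4 * M) * (1 + |(n : ℝ)|) ^ 3 := by nlinarith
  · calc ‖p (n + 1) + e (n + 1) - (p n + e n)‖
          ≤ ‖p (n + 1) - p n‖ + (‖e (n + 1)‖ + ‖e n‖) := by
          rw [add_sub_add_comm]
          exact (norm_add_le _ _).trans (by gcongr; exact norm_sub_le _ _)
      _ ≤ (K + 4 * M) * (1 + |(n : ℝ)|) ^ 2 := by nlinarith
  · calc ‖p (n + 2) + e (n + 2) - 2 * (p (n + 1) + e (n + 1)) + (p n + e n)‖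
          ≤ ‖p (n + 2) - 2 * p (n + 1) + p n‖ + (‖e (n + 2)‖ + 2 * ‖e (n + 1)‖ + ‖e n‖) := by
          rw [show p (n + 2) + e (n + 2) - 2 * (p (n + 1) + e (n + 1)) + (p n + e n)
            = (p (n + 2) - 2 * p (n + 1) + p n) + (e (n + 2) - 2 * e (n + 1) + e n) by ring]
          refine (norm_add_le _ _).trans ?_
          gcongr
          refine (norm_add_le _ _).trans ?_
          gcongr
          exact (norm_sub_le _ _).trans_eq (by rw [norm_mul, Complex.norm_two])
      _ ≤ (K + 4 * M) * (1 + |(n : ℝ)|) := by nlinarith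

lemma symbolBoundAt_of_conj_neg {q : ℤ → ℂ} {K : ℝ} (hq : ∀ n, q (-n) = conj (q n))
    (h : ∀ n, 0 ≤ n → SymbolBoundAt q K n) (n : ℤ) : SymbolBoundAt q (9 * K) n := by
  have hK : 0 ≤ K := by simpa using (norm_nonneg _).trans (h 0 le_rfl).1
  have hw : 1 ≤ 1 + |(n : ℝ)| := le_add_of_nonneg_right (abs_nonneg _)
  have hw3 : 1 ≤ (1 + |(n : ℝ)|) ^ 3 := one_le_pow₀ hw
  rcases le_or_gt 0 n with hn | hn
  · obtain ⟨h0, h1, h2⟩ := h n hn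
    exact ⟨by nlinarith, by nlinarith, by nlinarith⟩
  have hconj : ∀ k, q k = conj (q (-k)) := fun k => by rw [hq, Complex.conj_conj]
  have habs : |(n : ℝ)| = -n := abs_of_neg (by exact_mod_cast hn)
  refine ⟨?_, ?_, ?_⟩
  · have := (h (-n) (by omega)).1
    rw [hconj n, norm_conj]
    push_cast at this
    rw [abs_neg] at this
    nlinarith
  · obtain ⟨m, hm, rfl⟩ : ∃ m, 0 ≤ m ∧ n = -(m + 1) := ⟨-n - 1, by omega, by ring⟩
    have := (h m hm).2.1
    rw [hconj (-(m + 1) + 1), hconj (-(m + 1)), ← map_sub, norm_conj, norm_sub_rev,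
      show -(-(m + 1) + 1) = m by ring, neg_neg]
    push_cast at this habs ⊢
    have hmR : (0 : ℝ) ≤ m := by exact_mod_cast hm
    rw [abs_of_nonneg hmR] at this
    rw [habs, neg_neg]
    nlinarith [mul_nonneg hK hmR, mul_nonneg hK (mul_nonneg hmR hmR)]
  · rcases eq_or_lt_of_le (show n ≤ -1 by omega) with rfl | hn1
    · have h0 := (h 0 le_rfl).1
      have h1 := (h 1 zero_le_one).1
      norm_num at h0 h1 ⊢
      rw [hq 1]
      calc ‖q 1 - 2 * q 0 + conj (q 1)‖ ≤ ‖q 1‖ + 2 * ‖q 0‖ + ‖q 1‖ := by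
            refine (norm_add_le _ _).trans ?_
            rw [norm_conj]
            gcongr
            exact (norm_sub_le _ _).trans_eq (by rw [norm_mul, Complex.norm_two])
        _ ≤ 9 * K * 2 := by linarith
    obtain ⟨m, hm, rfl⟩ : ∃ m, 0 ≤ m ∧ n = -(m + 2) := ⟨-n - 2, by omega, by ring⟩
    have := (h m hm).2.2
    rw [hconj (-(m + 2) + 2), hconj (-(m + 2) + 1), hconj (-(m + 2)),
      show -(-(m + 2) + 2) = m by ring, show -(-(m + 2) + 1) = m + 1 by ring, neg_neg,
      show ∀ a b c : ℂ, conj a - 2 * conj b + conj c = conj (c - 2 * b + a) by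
        intros; simp only [map_add, map_sub, map_mul, map_ofNat]; ring, norm_conj]
    push_cast at this habs ⊢
    have hmR : (0 : ℝ) ≤ m := by exact_mod_cast hm
    rw [abs_of_nonneg hmR] at this
    rw [habs, neg_neg]
    nlinarith [mul_nonneg hK hmR, mul_nonneg hK (mul_nonneg hmR hmR)]

section Resolvent

lemma one_add_abs_le_two_mul_one_add_abs_add_one (n : ℤ) :
    1 + |(n : ℝ)| ≤ 2 * (1 + |((n + 1 : ℤ) : ℝ)|) := by
  have := abs_sub_abs_le_abs_sub (n : ℝ) (n + 1)
  push_cast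
  rw [show (n : ℝ) - (n + 1) = -1 by ring, abs_neg, abs_one] at this
  linarith [abs_nonneg ((n : ℝ) + 1)]

lemma one_add_abs_add_one_le_two_mul_one_add_abs (n : ℤ) :
    1 + |((n + 1 : ℤ) : ℝ)| ≤ 2 * (1 + |(n : ℝ)|) := by
  push_cast
  linarith [abs_add_le (n : ℝ) 1, abs_nonneg (n : ℝ), abs_one (α := ℝ)]

lemma norm_inv_le_of_le_re {w : ℂ} {a : ℝ} (ha : 0 < a) (h : a ≤ w.re) : ‖w⁻¹‖ ≤ a⁻¹ := by
  rw [norm_inv]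
  exact inv_anti₀ ha (h.trans (re_le_norm w))

variable {q : ℤ → ℂ} {K c : ℝ} {lam : ℂ}

lemma norm_mul_inv_sub_le (hq : ∀ k, SymbolBoundAt q K k) (hc : 0 < c)
    (hre : ∀ k : ℤ, c * (1 + |(k : ℝ)|) ^ 3 ≤ (lam - q k).re) (n : ℤ) :
    ‖lam * (lam - q n)⁻¹‖ ≤ 1 + K / c := by
  have hρ : 0 < c * (1 + |(n : ℝ)|) ^ 3 := by positivity
  have hw : lam - q n ≠ 0 := fun h => by simpa [h] using hρ.trans_le (hre n)
  calc ‖lam * (lam - q n)⁻¹‖ = ‖1 + q n * (lam - q n)⁻¹‖ := by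
        congr 1; field_simp; ring
    _ ≤ 1 + K * (1 + |(n : ℝ)|) ^ 3 * (c * (1 + |(n : ℝ)|) ^ 3)⁻¹ := by
        refine (norm_add_le _ _).trans ?_
        rw [norm_one, norm_mul]
        exact add_le_add_right (mul_le_mul (hq n).1 (norm_inv_le_of_le_re hρ (hre n))
          (norm_nonneg _) ((norm_nonneg _).trans (hq n).1)) 1
    _ = 1 + K / c := by field_simp

lemma abs_mul_norm_mul_inv_sub_sub_le (hq : ∀ k, SymbolBoundAt q K k) (hc : 0 < c)
    (hre : ∀ k : ℤ, c * (1 + |(k : ℝ)|) ^ 3 ≤ (lam - q k).re) (n : ℤ) :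
    |(n : ℝ)| * ‖lam * (lam - q (n + 1))⁻¹ - lam * (lam - q n)⁻¹‖
      ≤ (1 + K / c) * (K / c) := by
  set ρ := 1 + |(n : ℝ)|
  have hρ0 : 0 < ρ := by positivity
  have hρ : 0 < c * ρ ^ 3 := by positivity
  have hw : ∀ k, lam - q k ≠ 0 := fun k h => by
    simpa [h] using (show 0 < c * (1 + |(k : ℝ)|) ^ 3 by positivity).trans_le (hre k)
  have hK : 0 ≤ K := by simpa using (norm_nonneg _).trans (hq 0).1
  have hdiff : lam * (lam - q (n + 1))⁻¹ - lam * (lam - q n)⁻¹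
      = lam * (lam - q (n + 1))⁻¹ * ((q (n + 1) - q n) * (lam - q n)⁻¹) := by
    field_simp [hw n, hw (n + 1)]; ring
  calc |(n : ℝ)| * ‖lam * (lam - q (n + 1))⁻¹ - lam * (lam - q n)⁻¹‖
      ≤ ρ * ((1 + K / c) * (K * ρ ^ 2 * (c * ρ ^ 3)⁻¹)) := by
        rw [hdiff, norm_mul _ ((q (n + 1) - q n) * _), norm_mul (q (n + 1) - q n)]
        gcongr
        · linarith
        · exact norm_mul_inv_sub_le hq hc hre _
        · exact (hq n).2.1
        · exact norm_inv_le_of_le_re hρ (hre n)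
    _ = (1 + K / c) * (K / c) := by field_simp

lemma sq_abs_mul_norm_mul_inv_sub_second_diff_le (hq : ∀ k, SymbolBoundAt q K k) (hc : 0 < c)
    (hre : ∀ k : ℤ, c * (1 + |(k : ℝ)|) ^ 3 ≤ (lam - q k).re) (n : ℤ) :
    |(n : ℝ)| ^ 2 * ‖lam * (lam - q (n + 2))⁻¹ - 2 * (lam * (lam - q (n + 1))⁻¹)
        + lam * (lam - q n)⁻¹‖ ≤ (1 + K / c) * (8 * K / c + 40 * K ^ 2 / c ^ 2) := by
  set ρ := 1 + |(n : ℝ)|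
  set ρ₁ := 1 + |((n + 1 : ℤ) : ℝ)|
  have hρ0 : 0 < ρ := by positivity
  have hρ : 0 < c * ρ ^ 3 := by positivity
  have hw : ∀ k, lam - q k ≠ 0 := fun k h => by
    simpa [h] using (show 0 < c * (1 + |(k : ℝ)|) ^ 3 by positivity).trans_le (hre k)
  have hK : 0 ≤ K := by simpa using (norm_nonneg _).trans (hq 0).1
  have hw₁ : ‖(lam - q (n + 1))⁻¹‖ ≤ 8 * (c * ρ ^ 3)⁻¹ := by
    have hρρ₁ : ρ ≤ 2 * ρ₁ := one_add_abs_le_two_mul_one_add_abs_add_one n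
    have : c * ρ ^ 3 / 8 ≤ (lam - q (n + 1)).re :=
      le_trans (by nlinarith [pow_le_pow_left₀ hρ0.le hρρ₁ 3]) (hre (n + 1))
    simpa [div_eq_mul_inv, mul_comm] using norm_inv_le_of_le_re (by positivity) this
  have hD₂ : ‖q (n + 2) - q n‖ ≤ 5 * K * ρ ^ 2 := by
    have hρ₁ρ : ρ₁ ≤ 2 * ρ := one_add_abs_add_one_le_two_mul_one_add_abs n
    have h1 := (hq (n + 1)).2.1
    rw [show n + 1 + 1 = n + 2 by ring] at h1
    calc ‖q (n + 2) - q n‖ ≤ ‖q (n + 2) - q (n + 1)‖ + ‖q (n + 1) - q n‖ :=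
          norm_sub_le_norm_sub_add_norm_sub _ _ _
      _ ≤ K * ρ₁ ^ 2 + K * ρ ^ 2 := add_le_add h1 (hq n).2.1
      _ ≤ 5 * K * ρ ^ 2 := by nlinarith [pow_le_pow_left₀ (by positivity) hρ₁ρ 2]
  have hdiff : lam * (lam - q (n + 2))⁻¹ - 2 * (lam * (lam - q (n + 1))⁻¹)
        + lam * (lam - q n)⁻¹
      = lam * (lam - q (n + 2))⁻¹ * ((q (n + 2) - 2 * q (n + 1) + q n) * (lam - q (n + 1))⁻¹
          + (q (n + 1) - q n) * (q (n + 2) - q n) * ((lam - q n)⁻¹ * (lam - q (n + 1))⁻¹)) := by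
    field_simp [hw n, hw (n + 1), hw (n + 2)]; ring
  calc |(n : ℝ)| ^ 2 * ‖lam * (lam - q (n + 2))⁻¹ - 2 * (lam * (lam - q (n + 1))⁻¹)
        + lam * (lam - q n)⁻¹‖
      ≤ ρ ^ 2 * ((1 + K / c) * (K * ρ * (8 * (c * ρ ^ 3)⁻¹)
          + K * ρ ^ 2 * (5 * K * ρ ^ 2) * ((c * ρ ^ 3)⁻¹ * (8 * (c * ρ ^ 3)⁻¹)))) := by
        rw [hdiff, norm_mul]
        gcongr
        · linarith
        · exact norm_mul_inv_sub_le hq hc hre _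
        · refine (norm_add_le _ _).trans ?_
          rw [norm_mul, norm_mul, norm_mul, norm_mul]
          gcongr
          exacts [(hq n).2.2, (hq n).2.1, norm_inv_le_of_le_re hρ (hre n)]
    _ = (1 + K / c) * (8 * K / c + 40 * K ^ 2 / c ^ 2) := by field_simp; ring

end Resolvent

lemma one_add_cube_le_eight_mul_four_pow (m : ℕ) : (1 + (m : ℝ)) ^ 3 ≤ 8 * 4 ^ m := by
  induction m with
  | zero => norm_num
  | succ k ih =>
    rcases Nat.eq_zero_or_pos k with rfl | hk
    · norm_num
    · have hk1 : (1 : ℝ) ≤ k := by exact_mod_cast hk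
      push_cast
      calc (1 + ((k : ℝ) + 1)) ^ 3 ≤ 4 * (1 + (k : ℝ)) ^ 3 := by nlinarith [sq_nonneg (k : ℝ)]
        _ ≤ 8 * 4 ^ (k + 1) := by rw [pow_succ (4 : ℝ) k]; linarith

lemma exists_mul_sub_mul_cube_add_le (a : ℝ) {b : ℝ} (hb : 0 < b) :
    ∃ M, ∀ x : ℝ, 0 ≤ x → a * x - b * x ^ 3 + b / 8 * (1 + x) ^ 3 ≤ M := by
  refine ⟨b / 2 + |a| * (1 + 2 * |a| / b), fun x hx => ?_⟩
  set t := 1 + 2 * |a| / b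
  have ht : 1 ≤ t := le_add_of_nonneg_right (by positivity)
  have hbt : 2 * |a| ≤ b * t := by
    simp only [t]; rw [mul_add, mul_div_cancel₀ _ hb.ne']; linarith
  have hax : a * x ≤ |a| * x := mul_le_mul_of_nonneg_right (le_abs_self a) hx
  have hlin : |a| * x ≤ b / 2 * x ^ 3 + |a| * t := by
    rcases le_total x t with hxt | hxt
    · nlinarith [abs_nonneg a, pow_nonneg hx 3, mul_nonneg hb.le (pow_nonneg hx 3)]
    · have hx2 : t ≤ x ^ 2 := by nlinarith
      have : |a| ≤ b / 2 * x ^ 2 := by nlinarith [mul_le_mul_of_nonneg_left hx2 hb.le]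
      nlinarith [mul_le_mul_of_nonneg_right this hx, abs_nonneg a]
  have hcube : (1 + x) ^ 3 ≤ 4 * (1 + x ^ 3) := by
    nlinarith [mul_nonneg (sq_nonneg (1 - x)) (show 0 ≤ 1 + x by linarith)]
  nlinarith [mul_le_mul_of_nonneg_left hcube (show 0 ≤ b / 8 by positivity)]

noncomputable def qseqPrincipal (αi αo βi βo σ γi γo : ℝ) (k : ℤ) : ℂ :=
  (((k : ℝ) * (σ - 2 * (γo - γi) - σ * (k : ℝ) ^ 2) : ℝ) : ℂ) *
    (((αo + αi : ℝ) : ℂ) - I * (βo - βi : ℝ))⁻¹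

section Qseq

variable {αi αo βi βo R σ γi γo : ℝ}

lemma qseq0_eq_qseq : qseq0 αi αo βi βo R σ γi γo = qseq αi αo βi βo R σ γi γo := by
  funext n
  by_cases hn : n = 0
  · simp [qseq0, hn, qseq, museq]
  · simp [qseq0, hn]

lemma Aseq_neg (hR : R ≠ 0) (n : ℤ) : Aseq αi αo R (-n) = Aseq αi αo R n := by
  rw [Aseq, Aseq, Int.sign_neg, mul_neg, zpow_neg]
  rcases eq_or_ne (R ^ (2 * n)) 1 with h | h
  · simp [h]
  · have : R ^ (2 * n) - 1 ≠ 0 := sub_ne_zero.mpr h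
    have : (R ^ (2 * n))⁻¹ - 1 ≠ 0 := sub_ne_zero.mpr (inv_ne_one.mpr h)
    field_simp
    push_cast
    ring

lemma museq_neg (n : ℤ) : museq σ γi γo (-n) = museq σ γi γo n := by
  simp [museq]

lemma qseq_neg (hR : R ≠ 0) (n : ℤ) :
    qseq αi αo βi βo R σ γi γo (-n) = conj (qseq αi αo βi βo R σ γi γo n) := by
  simp only [qseq, Aseq_neg hR, museq_neg, Int.sign_neg, map_mul, map_div₀, map_add,
    Complex.conj_ofReal, Complex.conj_I, Int.cast_neg, map_intCast]
  ring

lemma museq_natCast (m : ℕ) :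
    museq σ γi γo m = m * (σ - 2 * (γo - γi) - σ * (m : ℝ) ^ 2) := by
  simp [museq]

lemma Aseq_natCast {m : ℕ} (hm : m ≠ 0) (hR : 1 < R) :
    Aseq αi αo R m = αo + αi + 2 * αo / (R ^ (2 * m) - 1) := by
  have : R ^ (2 * m) - 1 ≠ 0 := (sub_pos.mpr (one_lt_pow₀ hR (by omega))).ne'
  rw [Aseq, Int.sign_natCast_of_ne_zero hm,
    show (2 : ℤ) * m = ((2 * m : ℕ) : ℤ) by push_cast; ring, zpow_natCast]
  field_simp
  ring

lemma Aseq_natCast_bounds (hαo : 0 ≤ αo) (hR : 2 ≤ R) {m : ℕ} (hm : m ≠ 0) :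
    αo + αi ≤ Aseq αi αo R m ∧ Aseq αi αo R m - (αo + αi) ≤ 4 * αo / 4 ^ m := by
  have h4 : (4 : ℝ) ^ m ≤ R ^ (2 * m) := by
    rw [pow_mul]; exact pow_le_pow_left₀ (by norm_num) (by nlinarith) m
  have h4' : (4 : ℝ) ≤ 4 ^ m := le_self_pow₀ (by norm_num) hm
  rw [Aseq_natCast hm (by linarith)]
  constructor
  · have : 0 ≤ 2 * αo / (R ^ (2 * m) - 1) := div_nonneg (by positivity) (by linarith)
    linarith
  · rw [add_sub_cancel_left, div_le_div_iff₀ (by linarith) (by positivity)]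
    nlinarith

-- `(a + ib) / (a² + b²) = (a - ib)⁻¹`, also at `a = b = 0`, where both sides are `0`.
lemma qseq_natCast {m : ℕ} (hm : m ≠ 0) :
    qseq αi αo βi βo R σ γi γo m
      = museq σ γi γo m * ((Aseq αi αo R m : ℂ) - I * (βo - βi : ℝ))⁻¹ := by
  rw [qseq, Int.sign_natCast_of_ne_zero hm, Complex.inv_def]
  simp [Complex.normSq_apply, div_eq_mul_inv]
  ring

lemma exists_norm_qseq_sub_qseqPrincipal_le (hαo : 0 ≤ αo) (hA : 0 < αo + αi) (hσ : 0 ≤ σ)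
    (hR : 2 ≤ R) :
    ∃ M, ∀ m : ℕ, ‖qseq αi αo βi βo R σ γi γo m - qseqPrincipal αi αo βi βo σ γi γo m‖ ≤ M := by
  set d := σ - 2 * (γo - γi)
  refine ⟨32 * αo * (|d| + σ) / (αo + αi) ^ 2, fun m => ?_⟩
  rcases eq_or_ne m 0 with rfl | hm
  · simp [qseq, museq, qseqPrincipal]
    positivity
  set A := Aseq αi αo R m
  set z : ℂ := (A : ℂ) - I * (βo - βi : ℝ)
  set w : ℂ := ((αo + αi : ℝ) : ℂ) - I * (βo - βi : ℝ)
  obtain ⟨hA₁, hA₂⟩ := Aseq_natCast_bounds (αi := αi) hαo hR hm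
  have hz : αo + αi ≤ ‖z‖ := hA₁.trans (by simpa [z] using re_le_norm z)
  have hw : αo + αi ≤ ‖w‖ := by simpa [w] using re_le_norm w
  have hν : |(m : ℝ) * (d - σ * (m : ℝ) ^ 2)| ≤ (|d| + σ) * 8 * 4 ^ m := by
    have hm0 : (0 : ℝ) ≤ m := m.cast_nonneg
    have hd : |d - σ * (m : ℝ) ^ 2| ≤ |d| + σ * m ^ 2 :=
      (abs_sub _ _).trans_eq (by rw [abs_of_nonneg (by positivity : 0 ≤ σ * (m : ℝ) ^ 2)])
    rw [abs_mul, abs_of_nonneg hm0, mul_assoc]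
    calc (m : ℝ) * |d - σ * (m : ℝ) ^ 2| ≤ (|d| + σ) * (1 + m) ^ 3 := by
          have h1 : (m : ℝ) ≤ (1 + m) ^ 3 := by nlinarith
          have h3 : (m : ℝ) ^ 3 ≤ (1 + m) ^ 3 := pow_le_pow_left₀ hm0 (by linarith) 3
          nlinarith [mul_le_mul_of_nonneg_left hd hm0,
            mul_le_mul_of_nonneg_left h1 (abs_nonneg d), mul_le_mul_of_nonneg_left h3 hσ]
      _ ≤ (|d| + σ) * (8 * 4 ^ m) := by
          gcongr; exact one_add_cube_le_eight_mul_four_pow m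
  calc ‖qseq αi αo βi βo R σ γi γo m - qseqPrincipal αi αo βi βo σ γi γo m‖
      = |(m : ℝ) * (d - σ * (m : ℝ) ^ 2)| * |A - (αo + αi)| / (‖z‖ * ‖w‖) := by
        have hwz : w - z = ((αo + αi - A : ℝ) : ℂ) := by simp [w, z]
        rw [qseq_natCast hm, museq_natCast, qseqPrincipal, Int.cast_natCast, ← mul_sub,
          inv_sub_inv (norm_pos_iff.mp (hA.trans_le hz)) (norm_pos_iff.mp (hA.trans_le hw)),
          hwz, norm_mul, norm_div, norm_mul, Complex.norm_real, Complex.norm_real,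
          Real.norm_eq_abs, Real.norm_eq_abs, abs_sub_comm, mul_div_assoc]
    _ ≤ (|d| + σ) * 8 * 4 ^ m * (4 * αo / 4 ^ m) / ((αo + αi) * (αo + αi)) := by
        gcongr
        rw [abs_of_nonneg (by linarith)]; exact hA₂
    _ = 32 * αo * (|d| + σ) / (αo + αi) ^ 2 := by field_simp; ring

lemma exists_symbolBoundAt_qseq (hαo : 0 ≤ αo) (hA : 0 < αo + αi) (hσ : 0 ≤ σ) (hR : 2 ≤ R) :
    ∃ K, ∀ n, SymbolBoundAt (qseq αi αo βi βo R σ γi γo) K n := by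
  obtain ⟨M, hM⟩ := exists_norm_qseq_sub_qseqPrincipal_le (βi := βi) (βo := βo) (γi := γi)
    (γo := γo) hαo hA hσ hR
  set w : ℂ := ((αo + αi : ℝ) : ℂ) - I * (βo - βi : ℝ)
  refine ⟨9 * ((|σ - 2 * (γo - γi)| + 7 * σ) * ‖w⁻¹‖ + 4 * M),
    symbolBoundAt_of_conj_neg (qseq_neg (by positivity)) fun n _ => ?_⟩
  have h := (symbolBoundAt_cubic hσ (σ - 2 * (γo - γi)) w⁻¹ n).add
    (e := qseq αi αo βi βo R σ γi γo - qseqPrincipal αi αo βi βo σ γi γo) fun k hk _ => by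
      lift k to ℕ using (by omega)
      exact hM k
  rwa [show (fun k : ℤ => (((k : ℝ) * (σ - 2 * (γo - γi) - σ * (k : ℝ) ^ 2) : ℝ) : ℂ) * w⁻¹)
    = qseqPrincipal αi αo βi βo σ γi γo from rfl, add_sub_cancel] at h

lemma exists_re_qseq_add_le (hαo : 0 ≤ αo) (hA : 0 < αo + αi) (hσ : 0 < σ) (hR : 2 ≤ R) :
    ∃ M c, 0 < c ∧
      ∀ k : ℤ, (qseq αi αo βi βo R σ γi γo k).re + c * (1 + |(k : ℝ)|) ^ 3 ≤ M := by
  obtain ⟨M₀, hM₀⟩ := exists_norm_qseq_sub_qseqPrincipal_le (βi := βi) (βo := βo) (γi := γi)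
    (γo := γo) hαo hA hσ.le hR
  set w : ℂ := ((αo + αi : ℝ) : ℂ) - I * (βo - βi : ℝ)
  have hw : 0 < w.re := by simpa [w] using hA
  have hρ : 0 < (w⁻¹).re := by
    rw [inv_re]; exact div_pos hw (normSq_pos.mpr fun h => by simp [h] at hw)
  obtain ⟨M, hM⟩ := exists_mul_sub_mul_cube_add_le ((w⁻¹).re * (σ - 2 * (γo - γi)))
    (mul_pos hρ hσ)
  refine ⟨M + M₀, (w⁻¹).re * σ / 8, by positivity, fun k => ?_⟩
  set m := k.natAbs
  have hk : (qseq αi αo βi βo R σ γi γo k).re = (qseq αi αo βi βo R σ γi γo m).re := by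
    rcases Int.natAbs_eq k with h | h
    · rw [← h]
    · rw [h, qseq_neg (by positivity), conj_re]
  have hkm : |(k : ℝ)| = m := by simp [m, Nat.cast_natAbs]
  have he : (qseq αi αo βi βo R σ γi γo m).re - (qseqPrincipal αi αo βi βo σ γi γo m).re ≤ M₀ :=
    (re_le_norm _).trans' (by rw [sub_re]) |>.trans (hM₀ m)
  have hP : (qseqPrincipal αi αo βi βo σ γi γo m).re
      = (w⁻¹).re * (σ - 2 * (γo - γi)) * m - (w⁻¹).re * σ * (m : ℝ) ^ 3 := by
    rw [qseqPrincipal, re_ofReal_mul, Int.cast_natCast]; ring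
  have := hM m m.cast_nonneg
  rw [hk, hkm]
  linarith

end Qseq

theorem statement17_general (αi αo βi βo R σ γi γo : ℝ)
    (hαi : 0 < αi) (hαo : 0 < αo) (hR : 2 ≤ R)
    (hσ : 0 < σ) :
    ∃ lamStar C : ℝ, ∀ lam : ℂ, lamStar ≤ lam.re → ∀ n : ℤ, n ≠ 0 →
      ‖(lam * (lam - qseq0 αi αo βi βo R σ γi γo n)⁻¹)‖ ≤ C
      ∧ (|n| : ℝ) * ‖(lam * (lam - qseq0 αi αo βi βo R σ γi γo (n + 1))⁻¹
          - lam * (lam - qseq0 αi αo βi βo R σ γi γo n)⁻¹)‖ ≤ C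
      ∧ (|n| : ℝ) ^ 2 * ‖(lam * (lam - qseq0 αi αo βi βo R σ γi γo (n + 2))⁻¹
          - 2 * (lam * (lam - qseq0 αi αo βi βo R σ γi γo (n + 1))⁻¹)
          + lam * (lam - qseq0 αi αo βi βo R σ γi γo n)⁻¹)‖ ≤ C := by
  have hA : 0 < αo + αi := by linarith
  obtain ⟨K, hK⟩ := exists_symbolBoundAt_qseq (βi := βi) (βo := βo) (γi := γi) (γo := γo)
    hαo.le hA hσ.le hR
  obtain ⟨M, c, hc, hM⟩ := exists_re_qseq_add_le (βi := βi) (βo := βo) (γi := γi) (γo := γo)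
    hαo.le hA hσ hR
  refine ⟨M, max (1 + K / c) (max ((1 + K / c) * (K / c))
    ((1 + K / c) * (8 * K / c + 40 * K ^ 2 / c ^ 2))), fun lam hlam n _ => ?_⟩
  have hre (k : ℤ) : c * (1 + |(k : ℝ)|) ^ 3 ≤ (lam - qseq αi αo βi βo R σ γi γo k).re := by
    rw [sub_re]; linarith [hM k]
  rw [qseq0_eq_qseq]
  exact ⟨(norm_mul_inv_sub_le hK hc hre n).trans (le_max_left _ _),
    (abs_mul_norm_mul_inv_sub_sub_le hK hc hre n).trans
      ((le_max_left _ _).trans (le_max_right _ _)),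
    (sq_abs_mul_norm_mul_inv_sub_second_diff_le hK hc hre n).trans
      ((le_max_right _ _).trans (le_max_right _ _))⟩

/-- There exists `λ* ∈ ℝ` such that, with `S_n^λ := λ·(λ − q_n)⁻¹`
(and `q_0 := 0`), the three suprema over nonzero integers `n` and over `λ` with
`Re λ ≥ λ*` are finite: `sup |S_n^λ| < ∞`, `sup |n|·|S_{n+1}^λ − S_n^λ| < ∞`, and
`sup |n|²·|S_{n+2}^λ − 2S_{n+1}^λ + S_n^λ| < ∞`. -/
theorem statement17 (αi αo βi βo R σ γi γo : ℝ)
    (hαi : 0 < αi) (hαo : 0 < αo) (hβi : 0 ≤ βi) (hβo : 0 ≤ βo) (hR : 2 ≤ R)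
    (hσ : 0 < σ) :
    ∃ lamStar C : ℝ, ∀ lam : ℂ, lamStar ≤ lam.re → ∀ n : ℤ, n ≠ 0 →
      ‖(lam * (lam - qseq0 αi αo βi βo R σ γi γo n)⁻¹)‖ ≤ C
      ∧ (|n| : ℝ) * ‖(lam * (lam - qseq0 αi αo βi βo R σ γi γo (n + 1))⁻¹
          - lam * (lam - qseq0 αi αo βi βo R σ γi γo n)⁻¹)‖ ≤ C
      ∧ (|n| : ℝ) ^ 2 * ‖(lam * (lam - qseq0 αi αo βi βo R σ γi γo (n + 2))⁻¹
          - 2 * (lam * (lam - qseq0 αi αo βi βo R σ γi γo (n + 1))⁻¹)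
          + lam * (lam - qseq0 αi αo βi βo R σ γi γo n)⁻¹)‖ ≤ C :=
  statement17_general αi αo βi βo R σ γi γo hαi hαo hR hσ
end

section
/- Assume γ_o > γ_i. Then for every nonzero integer n one has μ(n) ≤ −2(γ_o − γ_i) < 0, and there exists ω > 0 such that Re q_n ≤ −ω for every n ∈ ℤ \ {0}; in particular the entire family of eigenvalues {q_n : n ≠ 0} of the linearization at the trivial solution lies in the half-plane { λ : Re λ ≤ −ω }. -/
open Complex Filter

lemma frac_bounds (u : ℝ) (hu : 4 ≤ u) :
    1 ≤ (u + 1) / (u - 1) ∧ (u + 1) / (u - 1) ≤ 5 / 3 := by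
  have h1 : (0:ℝ) < u - 1 := by linarith
  constructor
  · rw [le_div_iff₀ h1]; linarith
  · rw [div_le_iff₀ h1]; linarith

lemma sign_frac (R : ℝ) (hR : 2 ≤ R) (n : ℤ) (hn : n ≠ 0) :
    1 ≤ (Int.sign n : ℝ) * ((R ^ (2 * n) + 1) / (R ^ (2 * n) - 1)) ∧
    (Int.sign n : ℝ) * ((R ^ (2 * n) + 1) / (R ^ (2 * n) - 1)) ≤ 5 / 3 := by
  have hR1 : (1:ℝ) ≤ R := by linarith
  have hfour : ∀ m : ℤ, 1 ≤ m → (4:ℝ) ≤ R ^ (2 * m) := by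
    intro m hm
    have h1 : (R:ℝ) ^ (2:ℤ) ≤ R ^ (2 * m) := zpow_le_zpow_right₀ hR1 (by omega)
    have h2 : (R:ℝ) ^ (2:ℤ) = R * R := zpow_two R
    rw [h2] at h1
    nlinarith
  rcases lt_or_gt_of_ne hn with hneg | hpos
  · have hs : (Int.sign n : ℝ) = -1 := by
      rw [Int.sign_eq_neg_one_iff_neg.mpr hneg]; norm_num
    have hu4 : (4:ℝ) ≤ R ^ (2 * (-n)) := hfour (-n) (by omega)
    set u : ℝ := R ^ (2 * (-n)) with hu
    have hu0 : u ≠ 0 := by positivity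
    have hkey : R ^ (2 * n) = u⁻¹ := by
      rw [hu, ← zpow_neg]; ring_nf
    have heq : (Int.sign n : ℝ) * ((R ^ (2 * n) + 1) / (R ^ (2 * n) - 1))
        = (u + 1) / (u - 1) := by
      rw [hs, hkey]
      have h1 : u - 1 ≠ 0 := by intro h; nlinarith
      have h1' : 1 - u ≠ 0 := by intro h; nlinarith
      have h2 : u⁻¹ - 1 ≠ 0 := by
        intro h
        have : u⁻¹ = 1 := by linarith
        have : u = 1 := by field_simp at this; linarith
        nlinarith
      field_simp
      ring
    rw [heq]; exact frac_bounds u hu4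
  · have hs : (Int.sign n : ℝ) = 1 := by
      rw [Int.sign_eq_one_iff_pos.mpr hpos]; norm_num
    have hu4 : (4:ℝ) ≤ R ^ (2 * n) := hfour n (by omega)
    rw [hs, one_mul]
    exact frac_bounds _ hu4

lemma qseq_re (αi αo βi βo R σ γi γo : ℝ) (n : ℤ) :
    (qseq αi αo βi βo R σ γi γo n).re
      = Aseq αi αo R n * museq σ γi γo n / (Aseq αi αo R n ^ 2 + (βo - βi) ^ 2) := by
  rw [qseq, div_mul_eq_mul_div, Complex.div_ofReal_re]
  simp [Complex.mul_re, Complex.add_re, Complex.add_im]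

/-- stable case, `ϱ_o > ϱ_i`, i.e. `γ_o > γ_i`: for every `n ≠ 0` one
has `μ(n) ≤ −2(γ_o − γ_i) < 0`, and there is `ω > 0` with `Re q_n ≤ −ω` for all
`n ≠ 0`; hence all eigenvalues of the linearization lie in `{Re λ ≤ −ω}`. -/
theorem statement18 (αi αo βi βo R σ γi γo : ℝ)
    (hαi : 0 < αi) (hαo : 0 < αo) (hβi : 0 ≤ βi) (hβo : 0 ≤ βo) (hR : 2 ≤ R)
    (hσ : 0 < σ) (hγ : γi < γo) :
    (∀ n : ℤ, n ≠ 0 → museq σ γi γo n ≤ -2 * (γo - γi))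
    ∧ -2 * (γo - γi) < 0
    ∧ ∃ ω : ℝ, 0 < ω ∧ ∀ n : ℤ, n ≠ 0 →
        (qseq αi αo βi βo R σ γi γo n).re ≤ -ω := by
  have hmu : ∀ n : ℤ, n ≠ 0 → museq σ γi γo n ≤ -2 * (γo - γi) := by
    intro n hn
    have h1' : (1:ℝ) ≤ (|n| : ℝ) := by
      exact_mod_cast Int.one_le_abs (by omega)
    have hsq : ((|n|:ℤ):ℝ) ^ 2 = (n:ℝ) ^ 2 := by push_cast; exact sq_abs _
    rw [museq, ← hsq]
    set x : ℝ := ((|n|:ℤ):ℝ) with hx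
    have h1x : 1 ≤ x := by rw [hx]; exact_mod_cast Int.one_le_abs (by omega)
    have hx2 : 1 ≤ x ^ 2 := by nlinarith
    nlinarith [mul_nonneg (sub_nonneg.mpr h1x) (by linarith : (0:ℝ) ≤ 2 * (γo - γi)),
      mul_nonneg (mul_nonneg (by linarith : (0:ℝ) ≤ x) hσ.le)
        (by linarith : (0:ℝ) ≤ x ^ 2 - 1)]
  refine ⟨hmu, by linarith, ?_⟩
  set N : ℝ := 2 * (γo - γi) * (αo + αi) with hN
  set D : ℝ := (5 / 3 * αo + αi) ^ 2 + (βo - βi) ^ 2 with hD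
  have hNpos : 0 < N := by rw [hN]; nlinarith
  have hDpos : 0 < D := by rw [hD]; positivity
  refine ⟨N / D, div_pos hNpos hDpos, ?_⟩
  intro n hn
  obtain ⟨hf1, hf2⟩ := sign_frac R hR n hn
  set A : ℝ := Aseq αi αo R n with hA
  have hAlb : αo + αi ≤ A := by rw [hA, Aseq]; nlinarith
  have hAub : A ≤ 5 / 3 * αo + αi := by rw [hA, Aseq]; nlinarith
  have hApos : 0 < A := by linarith
  set d : ℝ := A ^ 2 + (βo - βi) ^ 2 with hd
  have hdpos : 0 < d := by
    rw [hd]; exact add_pos_of_pos_of_nonneg (pow_pos hApos 2) (sq_nonneg _)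
  have hdD : d ≤ D := by rw [hd, hD]; nlinarith
  rw [qseq_re, ← hA, ← hd]
  have hmun : museq σ γi γo n ≤ -2 * (γo - γi) := hmu n hn
  have h3 : A * museq σ γi γo n ≤ -N := by rw [hN]; nlinarith
  calc A * museq σ γi γo n / d ≤ -N / d := by gcongr
      _ ≤ -(N / D) := by
        rw [neg_div, neg_le_neg_iff]
        exact div_le_div_of_nonneg_left (le_of_lt hNpos) hdpos hdD
end
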